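/- arXiv:2012.12126 — 7 statements merged into one kernel-verified Lean document; each statement's English description precedes it below -/
import Mathlib

section
/- Let R be a bag over a finite attribute set X and S a bag over a finite attribute set Y. Then R and S are consistent if and only if their marginals on the common attributes agree, i.e., R[X ∩ Y] = S[X ∩ Y]. -/
variable {A : Type} [DecidableEq A]

/-- The type of `X`-tuples: functions assigning to each attribute `a ∈ X` an element
of its domain `D a`. -/
def Tup (D : A → Type) (X : Finset A) : Type := ∀ a : X, D a.1

/-- Restriction (projection) of an `X`-tuple to `Z ⊆ X`. -/
def Tup.restrict {D : A → Type} {X Z : Finset A} (h : Z ⊆ X) (t : Tup D X) : Tup D Z :=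
  fun a => t ⟨a.1, h a.2⟩

/-- A bag over `X`: a finitely supported function from `X`-tuples to ℕ. -/
abbrev Bag (D : A → Type) (X : Finset A) : Type := Tup D X →₀ ℕ

/-- The marginal of a bag on `Z ⊆ X`. -/
noncomputable def Bag.marginal {D : A → Type} {X Z : Finset A} (h : Z ⊆ X) (R : Bag D X) :
    Bag D Z := Finsupp.mapDomain (Tup.restrict h) R

/-- Two bags are consistent if a common bag over the union of schemas has them as marginals. -/
def Consistent {D : A → Type} {X Y : Finset A} (R : Bag D X) (S : Bag D Y) : Prop :=
  ∃ T : Bag D (X ∪ Y),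
    Bag.marginal Finset.subset_union_left T = R ∧
    Bag.marginal Finset.subset_union_right T = S

/-- Pairing lemma for multisets with equal images. -/
lemma exists_pairing {α β γ : Type*} (f : α → γ) (g : β → γ) :
    ∀ (r : Multiset α) (s : Multiset β), r.map f = s.map g →
    ∃ p : Multiset (α × β), p.map Prod.fst = r ∧ p.map Prod.snd = s ∧
      ∀ x ∈ p, f x.1 = g x.2 := by
  classical
  intro r
  induction r using Multiset.induction_on with
  | empty =>
    intro s h
    have : s.map g = 0 := by simpa using h.symm
    have hs : s = 0 := by simpa using this
    exact ⟨0, by simp, by simp [hs], by simp⟩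
  | cons a r ih =>
    intro s h
    have hfa : f a ∈ s.map g := by
      rw [← h]; simp
    obtain ⟨b, hb, hgb⟩ := Multiset.mem_map.mp hfa
    have hs : s = b ::ₘ s.erase b := (Multiset.cons_erase hb).symm
    have h' : r.map f = (s.erase b).map g := by
      have h2 : s.map g = f a ::ₘ (s.erase b).map g := by
        rw [← hgb, ← Multiset.map_cons, Multiset.cons_erase hb]
      have h3 : f a ::ₘ r.map f = f a ::ₘ (s.erase b).map g := by
        rw [← Multiset.map_cons, h, h2]
      exact (Multiset.cons_inj_right _).mp h3
    obtain ⟨p, hp1, hp2, hp3⟩ := ih (s.erase b) h'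
    refine ⟨(a, b) ::ₘ p, by simp [hp1], ?_, ?_⟩
    · rw [Multiset.map_cons, hp2]; exact hs.symm
    · intro x hx
      rcases Multiset.mem_cons.mp hx with hx | hx
      · subst hx; exact hgb.symm
      · exact hp3 x hx

/-- Glue two compatible tuples. -/
noncomputable def glue {D : A → Type} {X Y : Finset A} (x : Tup D X) (y : Tup D Y) :
    Tup D (X ∪ Y) := fun a =>
  if h : a.1 ∈ X then x ⟨a.1, h⟩
  else y ⟨a.1, (Finset.mem_union.mp a.2).resolve_left h⟩

lemma toMultiset_inj {α : Type*} [DecidableEq α] {f g : α →₀ ℕ}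
    (h : f.toMultiset = g.toMultiset) : f = g := by
  rw [← Finsupp.toMultiset_toFinsupp f, ← Finsupp.toMultiset_toFinsupp g, h]

lemma glue_restrict_left {D : A → Type} {X Y : Finset A} (x : Tup D X) (y : Tup D Y) :
    Tup.restrict Finset.subset_union_left (glue x y) = x := by
  funext a
  simp [Tup.restrict, glue, a.2]

lemma glue_restrict_right {D : A → Type} {X Y : Finset A} (x : Tup D X) (y : Tup D Y)
    (hc : Tup.restrict Finset.inter_subset_left x =
          Tup.restrict Finset.inter_subset_right y) :
    Tup.restrict Finset.subset_union_right (glue x y) = y := by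
  funext a
  simp only [Tup.restrict, glue]
  split
  · next h =>
      have ha : a.1 ∈ X ∩ Y := Finset.mem_inter.mpr ⟨h, a.2⟩
      have := congrFun hc ⟨a.1, ha⟩
      simpa [Tup.restrict] using this
  · rfl

/-- two bags are consistent if and only if their marginals on the common
attributes agree. -/
theorem stmt1 {D : A → Type} {X Y : Finset A} (R : Bag D X) (S : Bag D Y) :
    Consistent R S ↔
      Bag.marginal Finset.inter_subset_left R = Bag.marginal Finset.inter_subset_right S := by
  classical
  constructor
  · rintro ⟨T, hR, hS⟩
    subst hR hS
    simp only [Bag.marginal, ← Finsupp.mapDomain_comp]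
    rfl
  · intro h
    -- build via multisets
    set f : Tup D X → Tup D (X ∩ Y) := Tup.restrict Finset.inter_subset_left
    set g : Tup D Y → Tup D (X ∩ Y) := Tup.restrict Finset.inter_subset_right
    have hmap : (Finsupp.toMultiset R).map f = (Finsupp.toMultiset S).map g := by
      rw [Finsupp.toMultiset_map, Finsupp.toMultiset_map]
      exact congrArg _ h
    obtain ⟨p, hp1, hp2, hp3⟩ := exists_pairing f g _ _ hmap
    refine ⟨Multiset.toFinsupp (p.map (fun x => glue x.1 x.2)), ?_, ?_⟩
    · apply toMultiset_inj
      simp only [Bag.marginal]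
      rw [← Finsupp.toMultiset_map, Multiset.toFinsupp_toMultiset, Multiset.map_map]
      rw [← hp1]
      congr 1
      funext x
      exact glue_restrict_left x.1 x.2
    · apply toMultiset_inj
      simp only [Bag.marginal]
      rw [← Finsupp.toMultiset_map, Multiset.toFinsupp_toMultiset, Multiset.map_map]
      rw [← hp2]
      exact Multiset.map_congr rfl (fun x hx => glue_restrict_right x.1 x.2 (hp3 x hx))
end

section
/- Let R be a bag over a finite attribute set X and S a bag over a finite attribute set Y. If there exists a finitely supported function T from (X ∪ Y)-tuples to the non-negative rationals whose marginals satisfy T[X] = R and T[Y] = S, then R and S are consistent, i.e., there exists such a T with values in the non-negative integers. -/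
/-!
Both `R` and `S` are marginals of `T`, so their marginals on `X ∩ Y` are marginals of `T` as
well and hence coincide (first as rational, then as integer bags). Two bags with a common
marginal on `X ∩ Y` are always consistent: viewing them as multisets of tuples, pair each tuple
of `R` greedily with a tuple of `S` that agrees with it on `X ∩ Y`, and glue each pair into an
`(X ∪ Y)`-tuple.
-/

variable {A : Type} [DecidableEq A]

open scoped NNRat

theorem Finsupp.mapDomain_apply_eq_finsum_mem {α β M : Type*} [AddCommMonoid M] (f : α → β)
    (v : α →₀ M) (b : β) : v.mapDomain f b = ∑ᶠ a ∈ {a | f a = b}, v a := by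
  classical
  rw [finsum_mem_eq_sum_of_inter_support_eq (t := {a ∈ v.support | f a = b})]
  · simp [mapDomain, single_apply, Finset.sum_filter, Finsupp.sum]
  · ext a
    simp [and_comm]

theorem Finsupp.mapDomain_eq_mapDomain_of_natCast {α β γ δ M : Type*} [AddCommMonoidWithOne M]
    [CharZero M] {p : α → γ} {q : β → γ} {r : δ → α} {s : δ → β} (hcomm : p ∘ r = q ∘ s)
    {T : δ →₀ M} {f : α →₀ ℕ} {g : β →₀ ℕ}
    (hf : T.mapDomain r = f.mapRange Nat.cast Nat.cast_zero)
    (hg : T.mapDomain s = g.mapRange Nat.cast Nat.cast_zero) :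
    f.mapDomain p = g.mapDomain q := by
  apply mapRange_injective (Nat.cast : ℕ → M) Nat.cast_zero Nat.cast_injective
  rw [← mapDomain_mapRange _ _ _ _ Nat.cast_add, ← mapDomain_mapRange _ _ _ _ Nat.cast_add,
    ← hf, ← hg, ← mapDomain_comp, ← mapDomain_comp, hcomm]

section Coupling

variable {α β γ δ : Type*} {p : α → γ} {q : β → γ} {r : δ → α} {s : δ → β}

theorem Multiset.exists_map_eq_of_map_eq (hglue : ∀ a b, p a = q b → ∃ d, r d = a ∧ s d = b)
    {m : Multiset α} {n : Multiset β} (h : m.map p = n.map q) :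
    ∃ u : Multiset δ, u.map r = m ∧ u.map s = n := by
  induction m using Multiset.induction_on generalizing n with
  | empty => exact ⟨0, by simp_all [eq_comm]⟩
  | cons a m ih =>
    obtain ⟨b, hb, hba⟩ : ∃ b ∈ n, q b = p a := by
      rw [← Multiset.mem_map, ← h]
      exact Multiset.mem_map_of_mem p (Multiset.mem_cons_self a m)
    obtain ⟨n, rfl⟩ := Multiset.exists_cons_of_mem hb
    rw [Multiset.map_cons, Multiset.map_cons, hba, Multiset.cons_inj_right] at h
    obtain ⟨u, rfl, rfl⟩ := ih h
    obtain ⟨d, rfl, rfl⟩ := hglue a b hba.symm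
    exact ⟨d ::ₘ u, by simp, by simp⟩

theorem Finsupp.exists_mapDomain_eq_of_mapDomain_eq
    (hglue : ∀ a b, p a = q b → ∃ d, r d = a ∧ s d = b)
    {f : α →₀ ℕ} {g : β →₀ ℕ} (h : f.mapDomain p = g.mapDomain q) :
    ∃ u : δ →₀ ℕ, u.mapDomain r = f ∧ u.mapDomain s = g := by
  classical
  obtain ⟨u, hr, hs⟩ := Multiset.exists_map_eq_of_map_eq hglue
    (m := toMultiset f) (n := toMultiset g) (by rw [toMultiset_map, toMultiset_map, h])
  refine ⟨Multiset.toFinsupp u, ?_, ?_⟩ <;>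
  · refine Function.LeftInverse.injective toMultiset_toFinsupp ?_
    rwa [← toMultiset_map, Multiset.toFinsupp_toMultiset]

end Coupling

theorem Tup.exists_restrict_union_eq {D : A → Type} {X Y : Finset A} (x : Tup D X)
    (y : Tup D Y)
    (h : Tup.restrict Finset.inter_subset_left x = Tup.restrict Finset.inter_subset_right y) :
    ∃ t : Tup D (X ∪ Y), Tup.restrict Finset.subset_union_left t = x ∧
      Tup.restrict Finset.subset_union_right t = y := by
  refine ⟨fun a => if ha : a.1 ∈ X then x ⟨a.1, ha⟩
    else y ⟨a.1, (Finset.mem_union.mp a.2).resolve_left ha⟩, ?_, ?_⟩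
  · funext a
    simp [Tup.restrict, a.2]
  · funext a
    by_cases ha : a.1 ∈ X
    · simpa [Tup.restrict, ha] using congrFun h ⟨a.1, Finset.mem_inter.mpr ⟨ha, a.2⟩⟩
    · simp [Tup.restrict, ha]

/-- if there is a finitely supported non-negative *rational* valued function on
`(X ∪ Y)`-tuples whose marginals are `R` and `S`, then `R` and `S` are consistent (i.e., there
is such a function with non-negative *integer* values). -/
theorem stmt2 {D : A → Type} {X Y : Finset A} (R : Bag D X) (S : Bag D Y)
    (T : Tup D (X ∪ Y) → ℚ≥0)
    (hfin : (Function.support T).Finite)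
    (hX : ∀ x : Tup D X,
      ∑ᶠ t ∈ {t : Tup D (X ∪ Y) | Tup.restrict Finset.subset_union_left t = x}, T t
        = (R x : ℚ≥0))
    (hY : ∀ y : Tup D Y,
      ∑ᶠ t ∈ {t : Tup D (X ∪ Y) | Tup.restrict Finset.subset_union_right t = y}, T t
        = (S y : ℚ≥0)) :
    Consistent R S := by
  set T' := Finsupp.ofSupportFinite T hfin
  have hTX : T'.mapDomain (Tup.restrict Finset.subset_union_left) =
      R.mapRange (Nat.cast : ℕ → ℚ≥0) Nat.cast_zero := by
    ext x
    rw [Finsupp.mapDomain_apply_eq_finsum_mem, Finsupp.mapRange_apply, ← hX x]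
    rfl
  have hTY : T'.mapDomain (Tup.restrict Finset.subset_union_right) =
      S.mapRange (Nat.cast : ℕ → ℚ≥0) Nat.cast_zero := by
    ext y
    rw [Finsupp.mapDomain_apply_eq_finsum_mem, Finsupp.mapRange_apply, ← hY y]
    rfl
  have hcommon : R.mapDomain (Tup.restrict Finset.inter_subset_left) =
      S.mapDomain (Tup.restrict Finset.inter_subset_right) :=
    Finsupp.mapDomain_eq_mapDomain_of_natCast (by rfl) hTX hTY
  exact Finsupp.exists_mapDomain_eq_of_mapDomain_eq Tup.exists_restrict_union_eq hcommon
end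

section
/- Let X_1, …, X_m be finite sets of attributes satisfying the running intersection property in this order: for every i with 2 ≤ i ≤ m there exists j < i such that X_i ∩ (X_1 ∪ ⋯ ∪ X_{i-1}) ⊆ X_j. Then every pairwise consistent collection of bags R_1 over X_1, …, R_m over X_m is globally consistent. -/
variable {A : Type} [DecidableEq A]

-- auxiliary lemmas

theorem Bag.marginal_marginal {D : A → Type} {X Y Z : Finset A} (h1 : Y ⊆ X) (h2 : Z ⊆ Y)
    (T : Bag D X) : (T.marginal h1).marginal h2 = T.marginal (h2.trans h1) := by
  unfold Bag.marginal
  rw [← Finsupp.mapDomain_comp]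
  rfl

theorem Bag.marginal_self {D : A → Type} {X : Finset A} (h : X ⊆ X) (T : Bag D X) :
    T.marginal h = T := by
  unfold Bag.marginal
  have : Tup.restrict (D := D) h = id := rfl
  rw [this, Finsupp.mapDomain_id]

theorem Bag.toMultiset_marginal {D : A → Type} {X Z : Finset A} (h : Z ⊆ X) (T : Bag D X) :
    Finsupp.toMultiset (T.marginal h) = T.toMultiset.map (Tup.restrict h) := by
  unfold Bag.marginal
  rw [Finsupp.toMultiset_map]

theorem consistent_marginal {D : A → Type} {X Y : Finset A} {R : Bag D X} {S : Bag D Y}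
    (h : Consistent R S) :
    Bag.marginal Finset.inter_subset_left R = Bag.marginal Finset.inter_subset_right S := by
  obtain ⟨T, hR, hS⟩ := h
  rw [← hR, ← hS, Bag.marginal_marginal, Bag.marginal_marginal]

theorem multiset_pairing {α β γ : Type*} (f : α → γ) (g : β → γ) (a : Multiset α) :
    ∀ b : Multiset β, a.map f = b.map g →
    ∃ c : Multiset (α × β), c.map Prod.fst = a ∧ c.map Prod.snd = b ∧ ∀ p ∈ c, f p.1 = g p.2 := by
  classical
  induction a using Multiset.induction_on with
  | empty =>
    intro b hb
    have hb0 : b = 0 := by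
      rw [← Multiset.map_eq_zero (f := g), ← hb, Multiset.map_zero]
    exact ⟨0, by simp, by simp [hb0], by simp⟩
  | cons x a ih =>
    intro b hb
    rw [Multiset.map_cons] at hb
    have hx : f x ∈ b.map g := by rw [← hb]; exact Multiset.mem_cons_self _ _
    obtain ⟨y, hy, hgy⟩ := Multiset.mem_map.mp hx
    have hb' : y ::ₘ b.erase y = b := Multiset.cons_erase hy
    have hab : a.map f = (b.erase y).map g := by
      rw [← hb', Multiset.map_cons, hgy] at hb
      exact (Multiset.cons_inj_right _).mp hb
    obtain ⟨c, h1, h2, h3⟩ := ih _ hab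
    refine ⟨(x, y) ::ₘ c, by simp [h1], by rw [Multiset.map_cons, h2]; exact hb', ?_⟩
    intro p hp
    rcases Multiset.mem_cons.mp hp with hp | hp
    · subst hp; exact hgy.symm
    · exact h3 p hp

def Tup.combine {D : A → Type} {X Y : Finset A} (r : Tup D X) (s : Tup D Y) :
    Tup D (X ∪ Y) := fun a =>
  if h : a.1 ∈ X then r ⟨a.1, h⟩
  else s ⟨a.1, (Finset.mem_union.mp a.2).resolve_left h⟩

theorem Tup.restrict_combine_left {D : A → Type} {X Y : Finset A} (r : Tup D X) (s : Tup D Y) :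
    Tup.restrict Finset.subset_union_left (Tup.combine r s) = r := by
  funext a
  exact dif_pos a.2

theorem Tup.restrict_combine_right {D : A → Type} {X Y : Finset A} (r : Tup D X) (s : Tup D Y)
    (hag : Tup.restrict Finset.inter_subset_left r = Tup.restrict Finset.inter_subset_right s) :
    Tup.restrict Finset.subset_union_right (Tup.combine r s) = s := by
  funext a
  show (Tup.combine r s) ⟨a.1, _⟩ = s a
  unfold Tup.combine
  by_cases h : a.1 ∈ X
  · rw [dif_pos h]
    exact congrFun hag ⟨a.1, Finset.mem_inter.mpr ⟨h, a.2⟩⟩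
  · rw [dif_neg h]

theorem bag_join {D : A → Type} {X Y : Finset A} (R : Bag D X) (S : Bag D Y)
    (h : Bag.marginal Finset.inter_subset_left R = Bag.marginal Finset.inter_subset_right S) :
    Consistent R S := by
  classical
  have hm : R.toMultiset.map (Tup.restrict Finset.inter_subset_left) =
      S.toMultiset.map (Tup.restrict Finset.inter_subset_right) := by
    rw [Finsupp.toMultiset_map, Finsupp.toMultiset_map]
    exact congrArg Finsupp.toMultiset h
  obtain ⟨c, h1, h2, h3⟩ := multiset_pairing _ _ _ _ hm
  refine ⟨Multiset.toFinsupp (c.map fun p => Tup.combine p.1 p.2), ?_, ?_⟩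
  · apply Multiset.toFinsupp.symm.injective
    show Finsupp.toMultiset _ = Finsupp.toMultiset _
    rw [Bag.toMultiset_marginal, Multiset.toFinsupp_toMultiset, Multiset.map_map]
    rw [show ((Tup.restrict (D := D) Finset.subset_union_left) ∘ fun p : Tup D X × Tup D Y =>
      Tup.combine p.1 p.2) = Prod.fst from funext fun p => Tup.restrict_combine_left p.1 p.2]
    exact h1
  · apply Multiset.toFinsupp.symm.injective
    show Finsupp.toMultiset _ = Finsupp.toMultiset _
    rw [Bag.toMultiset_marginal, Multiset.toFinsupp_toMultiset, Multiset.map_map]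
    refine (Multiset.map_congr rfl ?_).trans h2
    intro p hp
    exact Tup.restrict_combine_right p.1 p.2 (h3 p hp)

theorem sup_Iio_castSucc {m : ℕ} (X : Fin (m+1) → Finset A) (i : Fin m) :
    (Finset.Iio i).sup (fun k => X k.castSucc) = (Finset.Iio i.castSucc).sup X := by
  apply le_antisymm
  · refine Finset.sup_le fun k hk => Finset.le_sup (Finset.mem_Iio.mpr ?_)
    exact Fin.castSucc_lt_castSucc_iff.mpr (Finset.mem_Iio.mp hk)
  · refine Finset.sup_le fun k hk => ?_
    have hk' : k < i.castSucc := Finset.mem_Iio.mp hk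
    have hkm : (k : ℕ) < m := Nat.lt_trans hk' i.isLt
    have hkc : (k.castLT hkm).castSucc = k := Fin.castSucc_castLT k hkm
    have : X k = X (k.castLT hkm).castSucc := by rw [hkc]
    rw [this]
    refine Finset.le_sup (f := fun l => X (Fin.castSucc l)) (Finset.mem_Iio.mpr ?_)
    rw [Fin.lt_def]
    simpa [Fin.lt_def] using hk'

theorem sup_univ_castSucc {m : ℕ} (X : Fin (m+1) → Finset A) :
    (Finset.univ : Finset (Fin m)).sup (fun k => X k.castSucc) =
      (Finset.Iio (Fin.last m)).sup X := by
  apply le_antisymm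
  · refine Finset.sup_le fun k _ => Finset.le_sup (Finset.mem_Iio.mpr ?_)
    exact Fin.castSucc_lt_last k
  · refine Finset.sup_le fun k hk => ?_
    have hk' : k < Fin.last m := Finset.mem_Iio.mp hk
    have hkm : (k : ℕ) < m := hk'
    have hkc : (k.castLT hkm).castSucc = k := Fin.castSucc_castLT k hkm
    have : X k = X (k.castLT hkm).castSucc := by rw [hkc]
    rw [this]
    exact Finset.le_sup (f := fun l => X (Fin.castSucc l)) (Finset.mem_univ _)

/-- Global consistency of a finite family of bags: a single bag over the union of all the
schemas has all of them as marginals. -/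
def GloballyConsistent {D : A → Type} {m : ℕ} (X : Fin m → Finset A)
    (R : ∀ i, Bag D (X i)) : Prop :=
  ∃ T : Bag D (Finset.univ.sup X),
    ∀ i, Bag.marginal (Finset.le_sup (Finset.mem_univ i)) T = R i

/-- if the schemas `X 0, …, X (m-1)` satisfy the running intersection property in
this order, then every pairwise consistent collection of bags over them is globally
consistent. -/
theorem stmt4 {D : A → Type} {m : ℕ} (X : Fin m → Finset A)
    (hRIP : ∀ i : Fin m, 0 < (i : ℕ) →
      ∃ j < i, X i ∩ (Finset.Iio i).sup X ⊆ X j)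
    (R : ∀ i, Bag D (X i))
    (hpair : ∀ i j, Consistent (R i) (R j)) :
    GloballyConsistent X R := by
  induction m with
  | zero => exact ⟨0, fun i => i.elim0⟩
  | succ m ih =>
    rcases Nat.eq_zero_or_pos m with hm | hm
    · subst hm
      have hs : Finset.univ.sup X ≤ X 0 := by
        refine Finset.sup_le fun i _ => ?_
        have hi : i = 0 := Fin.ext (by have := i.isLt; omega)
        exact le_of_eq (congrArg X hi)
      refine ⟨Bag.marginal hs (R 0), fun i => ?_⟩
      have hi : i = 0 := Fin.ext (by have := i.isLt; omega)
      subst hi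
      rw [Bag.marginal_marginal, Bag.marginal_self]
    · -- the inductive case, m ≥ 1
      obtain ⟨j, hj, hsub⟩ := hRIP (Fin.last m) hm
      set X' : Fin m → Finset A := fun i => X i.castSucc with hX'
      set Y : Finset A := Finset.univ.sup X' with hYdef
      set Z : Finset A := X (Fin.last m) with hZdef
      have hY1 : ∀ i : Fin m, X' i ⊆ Y := fun i => Finset.le_sup (Finset.mem_univ i)
      have hYeq : Y = (Finset.Iio (Fin.last m)).sup X := sup_univ_castSucc X
      -- RIP for the truncated family
      have hRIP' : ∀ i : Fin m, 0 < (i : ℕ) →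
          ∃ j' < i, X' i ∩ (Finset.Iio i).sup X' ⊆ X' j' := by
        intro i hi
        obtain ⟨j2, hj2, hs2⟩ := hRIP i.castSucc (by simpa using hi)
        have hj2m : (j2 : ℕ) < m := Nat.lt_trans hj2 i.isLt
        refine ⟨j2.castLT hj2m, ?_, ?_⟩
        · rw [Fin.lt_def]; exact hj2
        · have hc : (j2.castLT hj2m).castSucc = j2 := Fin.castSucc_castLT j2 hj2m
          have : X' (j2.castLT hj2m) = X j2 := by rw [hX']; simp only []; rw [hc]
          rw [this, hX']
          simp only []
          rw [sup_Iio_castSucc X i]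
          exact hs2
      obtain ⟨T, hT⟩ := ih X' hRIP' (fun i => R i.castSucc) (fun i j => hpair _ _)
      -- the index j is below m, so it comes from Fin m
      have hjm : (j : ℕ) < m := hj
      obtain ⟨j', rfl⟩ : ∃ j' : Fin m, j'.castSucc = j :=
        ⟨j.castLT hjm, Fin.castSucc_castLT j hjm⟩
      -- subset facts
      have pXjY : X j'.castSucc ⊆ Y := hY1 j'
      have pYZ_j : Y ∩ Z ⊆ X j'.castSucc := by
        intro a ha
        rcases Finset.mem_inter.mp ha with ⟨h1, h2⟩
        exact hsub (Finset.mem_inter.mpr ⟨h2, hYeq ▸ h1⟩)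
      have pYZ_ZXj : Y ∩ Z ⊆ Z ∩ X j'.castSucc := fun a ha =>
        Finset.mem_inter.mpr ⟨(Finset.mem_inter.mp ha).2, pYZ_j ha⟩
      -- marginal of T onto X j is R j
      have hTj : Bag.marginal pXjY T = R j'.castSucc := hT j'
      -- the common marginals agree
      have hM : Bag.marginal Finset.inter_subset_left T =
          Bag.marginal Finset.inter_subset_right (R (Fin.last m)) := by
        have c2 := consistent_marginal (hpair (Fin.last m) j'.castSucc)
        calc Bag.marginal Finset.inter_subset_left T
            = Bag.marginal pYZ_j (Bag.marginal pXjY T) :=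
              (Bag.marginal_marginal _ _ _).symm
          _ = Bag.marginal pYZ_j (R j'.castSucc) := by rw [hTj]
          _ = Bag.marginal pYZ_ZXj (Bag.marginal Finset.inter_subset_right (R j'.castSucc)) :=
              (Bag.marginal_marginal _ _ _).symm
          _ = Bag.marginal pYZ_ZXj
                (Bag.marginal Finset.inter_subset_left (R (Fin.last m))) := by rw [c2]
          _ = Bag.marginal Finset.inter_subset_right (R (Fin.last m)) :=
              Bag.marginal_marginal _ _ _
      obtain ⟨Tm, hTm1, hTm2⟩ := bag_join T (R (Fin.last m)) hM
      -- the full union is contained in Y ∪ Z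
      have hfin : Finset.univ.sup X ≤ Y ∪ Z := by
        refine Finset.sup_le fun i _ => ?_
        rcases eq_or_lt_of_le (Fin.le_last i) with he | hl
        · rw [he]; exact Finset.subset_union_right
        · have him : (i : ℕ) < m := hl
          obtain ⟨i', rfl⟩ : ∃ i' : Fin m, i'.castSucc = i :=
            ⟨i.castLT him, Fin.castSucc_castLT i him⟩
          exact Finset.Subset.trans (hY1 i') Finset.subset_union_left
      refine ⟨Bag.marginal hfin Tm, fun i => ?_⟩
      rw [Bag.marginal_marginal]
      rcases eq_or_lt_of_le (Fin.le_last i) with he | hl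
      · subst he
        exact hTm2
      · have him : (i : ℕ) < m := hl
        obtain ⟨i', rfl⟩ : ∃ i' : Fin m, i'.castSucc = i :=
          ⟨i.castLT him, Fin.castSucc_castLT i him⟩
        have hTi : Bag.marginal (hY1 i') T = R i'.castSucc := hT i'
        rw [← hTi, ← hTm1, Bag.marginal_marginal]
end

section
/- Let H be a hypergraph with finite vertex set V and hyperedges X_1, …, X_m that is k-uniform (every hyperedge has exactly k vertices) and d-regular (every vertex belongs to exactly d hyperedges) with d ≥ 2, where every attribute has domain containing {0, 1, …, d−1}. For i ≠ m, let R_i be the bag over X_i assigning multiplicity 1 to every X_i-tuple t with values in {0,…,d−1} whose total sum Σ_{C ∈ X_i} t(C) is congruent to 0 mod d, and multiplicity 0 to every other X_i-tuple; let R_m be the bag over X_m assigning multiplicity 1 to every X_m-tuple t with values in {0,…,d−1} whose total sum is congruent to 1 mod d, and 0 otherwise. Then the collection R_1, …, R_m is pairwise consistent but not globally consistent. -/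
variable {A : Type} [DecidableEq A]

section Aux

variable {D : A → Type} {d : ℕ}

/-- Encode a `Fin d`-valued parameter into a tuple. -/
def codeFn (e : ∀ a : A, Fin d ↪ D a) (X : Finset A) (s : ∀ a : (X : Finset A), Fin d) :
    Tup D X := fun a => e a.1 (s a)

lemma codeFn_injective (e : ∀ a : A, Fin d ↪ D a) (X : Finset A) :
    Function.Injective (codeFn (D := D) e X) := by
  intro s t h
  funext a
  exact (e a.1).injective (congrFun h a)

/-- Parameter restriction. -/
def projPar {X Z : Finset A} (h : Z ⊆ X) (s : ∀ a : (X : Finset A), Fin d) :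
    ∀ a : (Z : Finset A), Fin d := fun a => s ⟨a.1, h a.2⟩

lemma restrict_codeFn (e : ∀ a : A, Fin d ↪ D a) {X Z : Finset A} (h : Z ⊆ X)
    (s : ∀ a : (X : Finset A), Fin d) :
    Tup.restrict h (codeFn (D := D) e X s) = codeFn e Z (projPar h s) := rfl

/-- The "good" parameter set: sum of values `≡ c (mod d)`. -/
noncomputable def SP (d : ℕ) (X : Finset A) (c : ℕ) : Finset (∀ a : (X : Finset A), Fin d) := by
  classical
  exact Finset.univ.filter (fun s => (∑ a ∈ X.attach, ((s a : ℕ))) % d = c)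

lemma mem_SP {X : Finset A} {c : ℕ} {s : ∀ a : (X : Finset A), Fin d} :
    s ∈ SP d X c ↔ (∑ a ∈ X.attach, ((s a : ℕ))) % d = c := by
  classical
  simp [SP]

/-- Specification of the bags in the statement: they are sums of indicators over `SP`. -/
lemma bag_spec {X : Finset A} (e : ∀ a : A, Fin d ↪ D a) (c : ℕ) (R : Bag D X)
    (h1 : ∀ (t : Tup D X) (s : ∀ a : (X : Finset A), Fin d), (∀ a, t a = e a.1 (s a)) →
      (∑ a ∈ X.attach, ((s a : ℕ))) % d = c → R t = 1)
    (h0 : ∀ t : Tup D X,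
      (¬ ∃ s : ∀ a : (X : Finset A), Fin d, (∀ a, t a = e a.1 (s a)) ∧
        (∑ a ∈ X.attach, ((s a : ℕ))) % d = c) → R t = 0) :
    R = ∑ s ∈ SP d X c, Finsupp.single (codeFn e X s) 1 := by
  classical
  ext t
  rw [Finset.sum_apply']
  by_cases hex : ∃ s ∈ SP d X c, codeFn e X s = t
  · obtain ⟨s, hs, hst⟩ := hex
    rw [h1 t s (fun a => by rw [← hst]; rfl) (mem_SP.mp hs)]
    rw [Finset.sum_eq_single s]
    · simp [hst]
    · intro b hb hbs
      rw [Finsupp.single_apply, if_neg]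
      intro hbt
      exact hbs (codeFn_injective e X (hbt.trans hst.symm))
    · intro h; exact absurd hs h
  · rw [h0 t ?_, Finset.sum_eq_zero]
    · intro s hs
      rw [Finsupp.single_apply, if_neg (fun hh => hex ⟨s, hs, hh⟩)]
    · rintro ⟨s, hst, hcond⟩
      exact hex ⟨s, mem_SP.mpr hcond, (funext fun a => (hst a).symm)⟩

/-- Every bag is consistent with itself. -/
lemma consistent_self {X : Finset A} (R : Bag D X) : Consistent R R := by
  classical
  let J : Tup D X → Tup D (X ∪ X) := fun r c => r ⟨c.1, by simpa using c.2⟩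
  have hJ : ∀ (h : X ⊆ X ∪ X), (Tup.restrict (D := D) h) ∘ J = id := by
    intro h; funext r; funext a; rfl
  refine ⟨Finsupp.mapDomain J R, ?_, ?_⟩ <;>
  · rw [Bag.marginal, ← Finsupp.mapDomain_comp, hJ, Finsupp.mapDomain_id]

end Aux


section Aux2
variable {d : ℕ}

def zToFin [NeZero d] (z : ZMod d) : Fin d := ⟨z.val, ZMod.val_lt z⟩

lemma zToFin_cast [NeZero d] (z : ZMod d) : (((zToFin z : Fin d) : ℕ) : ZMod d) = z :=
  ZMod.natCast_rightInverse z

lemma zToFin_coe [NeZero d] (v : Fin d) : zToFin (((v : ℕ) : ZMod d)) = v :=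
  Fin.ext (ZMod.val_cast_of_lt v.2)

/-- Total extension of a parameter to a `ZMod d`-valued function on `A`. -/
def fsv {X : Finset A} (s : ∀ a : (X : Finset A), Fin d) (c : A) : ZMod d :=
  if h : c ∈ X then ((s ⟨c, h⟩ : ℕ) : ZMod d) else 0

lemma fsv_mem {X : Finset A} (s : ∀ a : (X : Finset A), Fin d) {c : A} (h : c ∈ X) :
    fsv s c = ((s ⟨c, h⟩ : ℕ) : ZMod d) := dif_pos h

lemma sum_fsv {X : Finset A} (s : ∀ a : (X : Finset A), Fin d) :
    ∑ a ∈ X, fsv s a = ((∑ a ∈ X.attach, ((s a : ℕ)) : ℕ) : ZMod d) := by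
  rw [Nat.cast_sum, ← Finset.sum_attach X (fun a => fsv s a)]
  exact Finset.sum_congr rfl (fun a _ => by simp [fsv, a.2])

lemma cond_iff [NeZero d] {X : Finset A} (s : ∀ a : (X : Finset A), Fin d) {c : ℕ} (hc : c < d) :
    ((∑ a ∈ X.attach, ((s a : ℕ))) % d = c) ↔ (∑ a ∈ X, fsv s a) = (c : ZMod d) := by
  rw [sum_fsv, ZMod.natCast_eq_natCast_iff', Nat.mod_eq_of_lt hc]

lemma sum_decomp {M : Type} [AddCommMonoid M] (X Y : Finset A) {a0 : A} (ha0 : a0 ∈ X \ Y)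
    (f : A → M) :
    ∑ c ∈ X, f c = (∑ c ∈ X ∩ Y, f c + ∑ c ∈ (X \ Y).erase a0, f c) + f a0 := by
  calc ∑ c ∈ X, f c = ∑ c ∈ X \ Y ∪ X ∩ Y, f c := by rw [Finset.sdiff_union_inter]
    _ = ∑ c ∈ X \ Y, f c + ∑ c ∈ X ∩ Y, f c :=
        Finset.sum_union (Finset.disjoint_sdiff_inter X Y)
    _ = (f a0 + ∑ c ∈ (X \ Y).erase a0, f c) + ∑ c ∈ X ∩ Y, f c := by
        rw [← Finset.insert_erase ha0, Finset.sum_insert (Finset.notMem_erase a0 _)]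
        rw [Finset.insert_erase ha0]
    _ = (∑ c ∈ X ∩ Y, f c + ∑ c ∈ (X \ Y).erase a0, f c) + f a0 := by abel

end Aux2

section Gmap
variable {d : ℕ} [NeZero d] {X Y : Finset A} {a0 b0 : A}

/-- The fiber-matching map from parameters on `X` to parameters on `Y`. -/
noncomputable def gmap (X Y : Finset A) (a0 b0 : A)
    (σ : {x // x ∈ (X \ Y).erase a0} ≃ {x // x ∈ (Y \ X).erase b0})
    (cJ : ℕ) (s : ∀ a : (X : Finset A), Fin d) : ∀ b : (Y : Finset A), Fin d :=
  fun b =>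
    if h : b.1 ∈ X then s ⟨b.1, h⟩
    else if hq : b.1 ∈ (Y \ X).erase b0 then
      s ⟨(σ.symm ⟨b.1, hq⟩).1,
         (Finset.mem_sdiff.mp (Finset.mem_of_mem_erase (σ.symm ⟨b.1, hq⟩).2)).1⟩
    else zToFin ((cJ : ZMod d) - ∑ c ∈ X ∩ Y, fsv s c - ∑ c ∈ (X \ Y).erase a0, fsv s c)

variable (σ : {x // x ∈ (X \ Y).erase a0} ≃ {x // x ∈ (Y \ X).erase b0}) (cJ : ℕ)
  (s : ∀ a : (X : Finset A), Fin d)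

lemma gmap_apply_mem {c : A} (hc : c ∈ Y) (hcX : c ∈ X) :
    gmap X Y a0 b0 σ cJ s ⟨c, hc⟩ = s ⟨c, hcX⟩ := dif_pos hcX

lemma gmap_apply_Q (p : {x // x ∈ (X \ Y).erase a0}) (hY : ((σ p) : A) ∈ Y)
    (hpX : (p : A) ∈ X) :
    gmap X Y a0 b0 σ cJ s ⟨(σ p : A), hY⟩ = s ⟨(p : A), hpX⟩ := by
  have hQ : ((σ p) : A) ∈ (Y \ X).erase b0 := (σ p).2
  have hnX : ((σ p) : A) ∉ X := (Finset.mem_sdiff.mp (Finset.mem_of_mem_erase hQ)).2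
  show dite _ _ _ = _
  rw [dif_neg hnX, dif_pos hQ]
  have h2 : σ.symm ⟨((σ p) : A), hQ⟩ = p := by
    rw [show (⟨((σ p) : A), hQ⟩ : {x // x ∈ (Y \ X).erase b0}) = σ p from rfl]
    exact Equiv.symm_apply_apply σ p
  simp only [h2]

lemma gmap_apply_b0 (hY : b0 ∈ Y) (hnX : b0 ∉ X) :
    gmap X Y a0 b0 σ cJ s ⟨b0, hY⟩ =
      zToFin ((cJ : ZMod d) - ∑ c ∈ X ∩ Y, fsv s c - ∑ c ∈ (X \ Y).erase a0, fsv s c) := by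
  show dite _ _ _ = _
  rw [dif_neg hnX, dif_neg (Finset.notMem_erase b0 _)]

lemma gmap_fsv_inter : ∀ c ∈ Y ∩ X, fsv (gmap X Y a0 b0 σ cJ s) c = fsv s c := by
  intro c hc
  have hY : c ∈ Y := (Finset.mem_inter.mp hc).1
  have hX : c ∈ X := (Finset.mem_inter.mp hc).2
  rw [fsv_mem _ hY, fsv_mem _ hX, gmap_apply_mem σ cJ s hY hX]

lemma gmap_fsv_Q :
    ∑ c ∈ (Y \ X).erase b0, fsv (gmap X Y a0 b0 σ cJ s) c =
      ∑ c ∈ (X \ Y).erase a0, fsv s c := by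
  rw [← Finset.sum_coe_sort ((Y \ X).erase b0) (fun c => fsv (gmap X Y a0 b0 σ cJ s) c),
    ← Finset.sum_coe_sort ((X \ Y).erase a0) (fun c => fsv s c),
    ← Equiv.sum_comp σ (fun q => fsv (gmap X Y a0 b0 σ cJ s) (q : A))]
  refine Finset.sum_congr rfl (fun p _ => ?_)
  have hY : ((σ p) : A) ∈ Y :=
    (Finset.mem_sdiff.mp (Finset.mem_of_mem_erase (σ p).2)).1
  have hpX : (p : A) ∈ X :=
    (Finset.mem_sdiff.mp (Finset.mem_of_mem_erase p.2)).1
  rw [fsv_mem _ hY, fsv_mem _ hpX, gmap_apply_Q σ cJ s p hY hpX]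

lemma gmap_sum (ha0 : a0 ∈ X \ Y) (hb0 : b0 ∈ Y \ X) :
    ∑ c ∈ Y, fsv (gmap X Y a0 b0 σ cJ s) c = (cJ : ZMod d) := by
  rw [sum_decomp Y X hb0]
  have hY : b0 ∈ Y := (Finset.mem_sdiff.mp hb0).1
  have hnX : b0 ∉ X := (Finset.mem_sdiff.mp hb0).2
  rw [Finset.sum_congr rfl (gmap_fsv_inter σ cJ s), gmap_fsv_Q σ cJ s,
    fsv_mem _ hY, gmap_apply_b0 σ cJ s hY hnX, zToFin_cast, Finset.inter_comm]
  ring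

lemma gmap_inv (ha0 : a0 ∈ X \ Y) (hb0 : b0 ∈ Y \ X) {cI : ℕ}
    (hs : ∑ c ∈ X, fsv s c = (cI : ZMod d)) :
    gmap Y X b0 a0 σ.symm cI (gmap X Y a0 b0 σ cJ s) = s := by
  funext a
  by_cases hY : a.1 ∈ Y
  · exact (gmap_apply_mem σ.symm cI (gmap X Y a0 b0 σ cJ s) a.2 hY).trans
      (gmap_apply_mem σ cJ s hY a.2)
  · by_cases hp : a.1 ∈ (X \ Y).erase a0
    · set p : {x // x ∈ (X \ Y).erase a0} := ⟨a.1, hp⟩ with hpdef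
      have hqY : ((σ p) : A) ∈ Y :=
        (Finset.mem_sdiff.mp (Finset.mem_of_mem_erase (σ p).2)).1
      have hX' : ((σ.symm (σ p)) : A) ∈ X := by
        rw [Equiv.symm_apply_apply]; exact a.2
      have key := gmap_apply_Q (X := Y) (Y := X) (a0 := b0) (b0 := a0) σ.symm cI
        (gmap X Y a0 b0 σ cJ s) (σ p) hX' hqY
      rw [gmap_apply_Q σ cJ s p hqY a.2] at key
      simp only [Equiv.symm_apply_apply] at key
      exact key
    · have ha : a.1 = a0 := by
        by_contra hne
        exact hp (Finset.mem_erase.mpr ⟨hne, Finset.mem_sdiff.mpr ⟨a.2, hY⟩⟩)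
      have hnY : a0 ∉ Y := (Finset.mem_sdiff.mp ha0).2
      have haX : a0 ∈ X := (Finset.mem_sdiff.mp ha0).1
      have key := gmap_apply_b0 (X := Y) (Y := X) σ.symm cI
        (gmap X Y a0 b0 σ cJ s) haX hnY
      rw [Finset.sum_congr rfl (gmap_fsv_inter σ cJ s), gmap_fsv_Q σ cJ s,
        Finset.inter_comm Y X] at key
      have hval : (cI : ZMod d) - ∑ c ∈ X ∩ Y, fsv s c - ∑ c ∈ (X \ Y).erase a0, fsv s c
          = ((s ⟨a0, haX⟩ : ℕ) : ZMod d) := by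
        have hd := sum_decomp X Y ha0 (fsv s)
        rw [hs, fsv_mem s haX] at hd
        rw [hd]; ring
      rw [hval, zToFin_coe] at key
      have haa : a = ⟨a0, haX⟩ := Subtype.ext ha
      rw [haa]
      exact key

end Gmap

lemma marginal_sum {D : A → Type} {X Z : Finset A} (h : Z ⊆ X) {ι : Type} (S : Finset ι)
    (F : ι → Tup D X) :
    Bag.marginal h (∑ s ∈ S, Finsupp.single (F s) (1 : ℕ)) =
      ∑ s ∈ S, Finsupp.single (Tup.restrict h (F s)) 1 := by
  classical
  rw [Bag.marginal, Finsupp.mapDomain_finset_sum]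
  exact Finset.sum_congr rfl fun s _ => Finsupp.mapDomain_single

lemma consistent_of_ne {D : A → Type} {d : ℕ} [NeZero d] (e : ∀ a : A, Fin d ↪ D a)
    {X Y : Finset A} {cI cJ : ℕ} (hXY : X ≠ Y) (hcard : X.card = Y.card)
    (hcI : cI < d) (hcJ : cJ < d) :
    Consistent (D := D) (∑ s ∈ SP d X cI, Finsupp.single (codeFn e X s) 1)
      (∑ s ∈ SP d Y cJ, Finsupp.single (codeFn e Y s) 1) := by
  classical
  have hXn : (X \ Y).Nonempty := by
    rw [Finset.sdiff_nonempty]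
    intro h
    exact hXY (Finset.eq_of_subset_of_card_le h (le_of_eq hcard.symm))
  have hYn : (Y \ X).Nonempty := by
    rw [Finset.sdiff_nonempty]
    intro h
    exact hXY ((Finset.eq_of_subset_of_card_le h (le_of_eq hcard)).symm)
  obtain ⟨a0, ha0⟩ := hXn
  obtain ⟨b0, hb0⟩ := hYn
  have hPQ : ((X \ Y).erase a0).card = ((Y \ X).erase b0).card := by
    rw [Finset.card_erase_of_mem ha0, Finset.card_erase_of_mem hb0]
    have h1 := Finset.card_sdiff_add_card_inter X Y
    have h2 := Finset.card_sdiff_add_card_inter Y X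
    rw [Finset.inter_comm Y X] at h2
    omega
  let σ : {x // x ∈ (X \ Y).erase a0} ≃ {x // x ∈ (Y \ X).erase b0} :=
    Finset.equivOfCardEq hPQ
  have hsub : (X : Finset A) ⊆ X ∪ Y := Finset.subset_union_left
  let lift : (∀ a : (X : Finset A), Fin d) → (∀ c : ((X ∪ Y : Finset A) : Finset A), Fin d) :=
    fun s c => if h : c.1 ∈ X then s ⟨c.1, h⟩ else gmap X Y a0 b0 σ cJ s ⟨c.1, by
      rcases Finset.mem_union.mp c.2 with h' | h'
      · exact absurd h' h
      · exact h'⟩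
  refine ⟨∑ s ∈ SP d X cI, Finsupp.single (codeFn e (X ∪ Y) (lift s)) 1, ?_, ?_⟩
  · rw [marginal_sum]
    refine Finset.sum_congr rfl (fun s hs => ?_)
    have hpar : projPar (Finset.subset_union_left : (X : Finset A) ⊆ X ∪ Y) (lift s) = s :=
      funext fun a => dif_pos a.2
    rw [restrict_codeFn, hpar]
  · rw [marginal_sum]
    have hre : ∀ s, Tup.restrict (D := D) Finset.subset_union_right
        (codeFn e (X ∪ Y) (lift s)) = codeFn e Y (gmap X Y a0 b0 σ cJ s) := by
      intro s
      rw [restrict_codeFn]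
      have hpar : projPar (Finset.subset_union_right : (Y : Finset A) ⊆ X ∪ Y) (lift s)
          = gmap X Y a0 b0 σ cJ s := by
        funext b
        show dite _ _ _ = _
        by_cases h : b.1 ∈ X
        · rw [dif_pos h]
          exact (gmap_apply_mem σ cJ s b.2 h).symm
        · rw [dif_neg h]
      rw [hpar]
    calc ∑ s ∈ SP d X cI,
          Finsupp.single (Tup.restrict (D := D) Finset.subset_union_right
            (codeFn e (X ∪ Y) (lift s))) 1
        = ∑ s ∈ SP d X cI, Finsupp.single (codeFn e Y (gmap X Y a0 b0 σ cJ s)) 1 :=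
          Finset.sum_congr rfl fun s _ => by rw [hre]
      _ = ∑ u ∈ SP d Y cJ, Finsupp.single (codeFn e Y u) 1 := ?_
    refine Finset.sum_nbij' (gmap X Y a0 b0 σ cJ) (gmap Y X b0 a0 σ.symm cI)
      ?_ ?_ ?_ ?_ ?_
    · intro s hs
      exact mem_SP.mpr ((cond_iff _ hcJ).mpr (gmap_sum σ cJ s ha0 hb0))
    · intro u hu
      exact mem_SP.mpr ((cond_iff _ hcI).mpr (gmap_sum σ.symm cI u hb0 ha0))
    · intro s hs
      exact gmap_inv σ cJ s ha0 hb0 ((cond_iff s hcI).mp (mem_SP.mp hs))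
    · intro u hu
      have := gmap_inv σ.symm cI u hb0 ha0 ((cond_iff u hcJ).mp (mem_SP.mp hu))
      simpa only [Equiv.symm_symm] using this
    · intro s hs
      rfl

lemma mapDomain_apply_ne_zero {α β : Type} [DecidableEq β] (f : α → β) (p : α →₀ ℕ)
    (x : α) (h : p x ≠ 0) : Finsupp.mapDomain f p (f x) ≠ 0 := by
  classical
  intro h0
  rw [Finsupp.mapDomain, Finsupp.sum_apply, Finsupp.sum] at h0
  have hx : x ∈ p.support := Finsupp.mem_support_iff.mpr h
  have hz := Finset.sum_eq_zero_iff.mp h0 x hx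
  rw [Finsupp.single_apply, if_pos rfl] at hz
  exact h hz

lemma SP_one_nonempty {d : ℕ} (hd : 2 ≤ d) {X : Finset A} (hX : X.Nonempty) :
    ∃ s : ∀ a : (X : Finset A), Fin d, (∑ a ∈ X.attach, ((s a : ℕ))) % d = 1 := by
  classical
  obtain ⟨a1, ha1⟩ := hX
  set s0 : ∀ a : (X : Finset A), Fin d :=
    fun a => if a.1 = a1 then ⟨1, by omega⟩ else ⟨0, by omega⟩ with hs0def
  refine ⟨s0, ?_⟩
  have h1 : ∀ a : (X : Finset A), (s0 a : ℕ) = if a.1 = a1 then 1 else 0 := by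
    intro a
    simp only [hs0def]
    split <;> rfl
  have h2 : ∑ a ∈ X.attach, ((s0 a : ℕ)) = 1 := by
    rw [Finset.sum_congr rfl (fun a _ => h1 a),
      Finset.sum_eq_single (⟨a1, ha1⟩ : (X : Finset A))]
    · exact if_pos rfl
    · intro b _ hb
      exact if_neg (fun hh => hb (Subtype.ext hh))
    · intro hmem
      exact absurd (Finset.mem_attach _ _) hmem
  rw [h2, Nat.mod_eq_of_lt (by omega)]


/-- let `H` be a `k`-uniform, `d`-regular hypergraph (`d ≥ 2`) with (pairwise
distinct) hyperedges `X 0, …, X m`, where every attribute's domain contains `{0, …, d-1}`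
(via the embeddings `e`).  The bags `R i` assigning multiplicity `1` exactly to the
`{0,…,d-1}`-valued tuples whose total sum is `≡ 0 (mod d)` (for `i ≠ m`), resp. `≡ 1 (mod d)`
(for `i = m`), and `0` to all other tuples, form a collection that is pairwise consistent but
not globally consistent. -/
theorem stmt6 {D : A → Type} {m k d : ℕ} (hd : 2 ≤ d) (hk : 1 ≤ k)
    (X : Fin (m + 1) → Finset A) (hinj : Function.Injective X)
    (e : ∀ a : A, Fin d ↪ D a)
    (huniform : ∀ i, (X i).card = k)
    (hregular : ∀ a ∈ Finset.univ.sup X,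
      (Finset.univ.filter (fun i : Fin (m + 1) => a ∈ X i)).card = d)
    (R : ∀ i, Bag D (X i))
    (hR1 : ∀ (i : Fin (m + 1)) (t : Tup D (X i)) (s : ∀ a : (X i : Finset A), Fin d),
      (∀ a, t a = e a.1 (s a)) →
      (∑ a ∈ (X i).attach, ((s a : ℕ))) % d = (if i = Fin.last m then 1 else 0) →
      R i t = 1)
    (hR0 : ∀ (i : Fin (m + 1)) (t : Tup D (X i)),
      (¬ ∃ s : ∀ a : (X i : Finset A), Fin d,
        (∀ a, t a = e a.1 (s a)) ∧
        (∑ a ∈ (X i).attach, ((s a : ℕ))) % d = (if i = Fin.last m then 1 else 0)) →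
      R i t = 0) :
    (∀ i j, Consistent (R i) (R j)) ∧ ¬ GloballyConsistent X R := by
  classical
  haveI : NeZero d := ⟨by omega⟩
  haveI : Fact (1 < d) := ⟨by omega⟩
  have hcd : ∀ i : Fin (m + 1), (if i = Fin.last m then 1 else 0) < d := by
    intro i; split <;> omega
  have hRspec : ∀ i, R i = ∑ s ∈ SP d (X i) (if i = Fin.last m then 1 else 0),
      Finsupp.single (codeFn e (X i) s) 1 :=
    fun i => bag_spec e _ (R i) (hR1 i) (hR0 i)
  constructor
  · intro i j
    by_cases hij : i = j
    · subst hij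
      exact consistent_self (R i)
    · rw [hRspec i, hRspec j]
      exact consistent_of_ne e (fun h => hij (hinj h))
        ((huniform i).trans (huniform j).symm) (hcd i) (hcd j)
  · rintro ⟨T, hT⟩
    -- `R (last)` is nonzero, hence `T` is nonzero
    have hlastne : (X (Fin.last m)).Nonempty := by
      rw [← Finset.card_pos, huniform]; omega
    obtain ⟨s0, hs0⟩ := SP_one_nonempty hd hlastne
    have hRlast : R (Fin.last m) (codeFn e _ s0) = 1 := by
      refine hR1 (Fin.last m) _ s0 (fun a => rfl) ?_
      rw [if_pos rfl]
      exact hs0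
    have hTne : T ≠ 0 := by
      intro h0
      have hbad := hT (Fin.last m)
      rw [h0, Bag.marginal, Finsupp.mapDomain_zero] at hbad
      rw [← hbad] at hRlast
      simp at hRlast
    obtain ⟨t0, ht0⟩ : ∃ t0, T t0 ≠ 0 := by
      by_contra hno
      push_neg at hno
      exact hTne (Finsupp.ext fun t => by simpa using hno t)
    -- extract parameters witnessing membership in the supports
    have hex : ∀ i, ∃ s : ∀ a : ((X i) : Finset A), Fin d,
        (∀ a, Tup.restrict (Finset.le_sup (Finset.mem_univ i)) t0 a = e a.1 (s a)) ∧
        (∑ a ∈ (X i).attach, ((s a : ℕ))) % d = (if i = Fin.last m then 1 else 0) := by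
      intro i
      by_contra hn
      have h0 : R i (Tup.restrict (Finset.le_sup (Finset.mem_univ i)) t0) = 0 :=
        hR0 i _ hn
      have hmarg : (Bag.marginal (Finset.le_sup (Finset.mem_univ i)) T)
          (Tup.restrict (Finset.le_sup (Finset.mem_univ i)) t0) ≠ 0 :=
        mapDomain_apply_ne_zero _ T t0 ht0
      rw [hT i, h0] at hmarg
      exact hmarg rfl
    choose s hs1 hs2 using hex
    -- a global ℕ-valued assignment
    let F : A → ℕ := fun a =>
      if h : ∃ i, a ∈ X i then ((s h.choose ⟨a, h.choose_spec⟩ : ℕ)) else 0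
    have hXV : ∀ i, X i ⊆ Finset.univ.sup X := fun i => Finset.le_sup (Finset.mem_univ i)
    have hkey : ∀ i a (ha : a ∈ X i), F a = ((s i ⟨a, ha⟩ : ℕ)) := by
      intro i a ha
      have hexa : ∃ i', a ∈ X i' := ⟨i, ha⟩
      have h1 := hs1 hexa.choose ⟨a, hexa.choose_spec⟩
      have h2 := hs1 i ⟨a, ha⟩
      have h3 : e a (s hexa.choose ⟨a, hexa.choose_spec⟩) = e a (s i ⟨a, ha⟩) := by
        rw [← h1, ← h2]
        rfl
      have h4 := (e a).injective h3
      show dite _ _ _ = _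
      rw [dif_pos hexa, h4]
    have hsumrow : ∀ i, ((∑ a ∈ X i, F a : ℕ) : ZMod d)
        = (((if i = Fin.last m then 1 else 0 : ℕ)) : ZMod d) := by
      intro i
      have hrw : ∑ a ∈ X i, F a = ∑ a ∈ (X i).attach, ((s i a : ℕ)) := by
        rw [← Finset.sum_attach (X i) F]
        exact Finset.sum_congr rfl fun a _ => hkey i a.1 a.2
      rw [hrw, ← ZMod.natCast_mod _ d, hs2 i]
    have hN1 : ((∑ i : Fin (m + 1), ∑ a ∈ X i, F a : ℕ) : ZMod d) = 1 := by
      rw [Nat.cast_sum, Finset.sum_congr rfl (fun i _ => hsumrow i)]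
      simp
    have hN2 : ((∑ i : Fin (m + 1), ∑ a ∈ X i, F a : ℕ) : ZMod d) = 0 := by
      have hrow : ∀ i, ∑ a ∈ X i, F a
          = ∑ a ∈ Finset.univ.sup X, if a ∈ X i then F a else 0 := by
        intro i
        rw [Finset.sum_ite_mem, Finset.inter_eq_right.mpr (hXV i)]
      have hcol : ∀ a ∈ Finset.univ.sup X,
          (∑ i : Fin (m + 1), if a ∈ X i then F a else 0) = d * F a := by
        intro a ha
        rw [← Finset.sum_filter, Finset.sum_const, hregular a ha, smul_eq_mul]
      calc ((∑ i : Fin (m + 1), ∑ a ∈ X i, F a : ℕ) : ZMod d)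
          = ((∑ a ∈ Finset.univ.sup X, ∑ i : Fin (m + 1),
              if a ∈ X i then F a else 0 : ℕ) : ZMod d) := by
            rw [Finset.sum_congr rfl fun i _ => hrow i, Finset.sum_comm]
        _ = ((∑ a ∈ Finset.univ.sup X, d * F a : ℕ) : ZMod d) := by
            rw [Finset.sum_congr rfl hcol]
        _ = 0 := by
            rw [Nat.cast_sum]
            refine Finset.sum_eq_zero fun a _ => ?_
            rw [Nat.cast_mul, ZMod.natCast_self, zero_mul]
    rw [hN1] at hN2
    exact one_ne_zero hN2
end

section
/- For every n ≥ 3, the cycle hypergraph C_n, with vertices A_1, …, A_n (each with domain containing {0, 1}) and hyperedges {A_1,A_2}, {A_2,A_3}, …, {A_{n-1},A_n}, {A_n,A_1}, does not have the local-to-global consistency property for bags: there exists a pairwise consistent collection of bags over the hyperedges of C_n that is not globally consistent. -/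
/-!
Colour the vertices by `Fin 2`, embedded in each domain. Put on every edge `{i, i + 1}` the bag
with one copy each of the tuples `00` and `11`, except on the closing edge `{last, 0}`, which
gets `01` and `10`. For two edges, colour one vertex of the closing edge not on the other edge
by `1` and everything else by `0`: this colouring and its complement form a bag over all
vertices whose marginals are the two given bags. A tuple in the support of a global bag,
however, would be coloured constantly along the path `0, 1, …, last` and yet separate `last`
from `0`.
-/

variable {A : Type} [DecidableEq A]

section Coloring

variable {V : Type} {D : V → Type}

theorem Bag.restrict_mem_support_marginal {X Z : Finset V} (h : Z ⊆ X) {T : Bag D X}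
    {t : Tup D X} (ht : t ∈ T.support) : Tup.restrict h t ∈ (Bag.marginal h T).support := by
  rw [← Finsupp.mem_toMultiset] at ht ⊢
  rw [Bag.marginal, ← Finsupp.toMultiset_map]
  exact Multiset.mem_map_of_mem _ ht

variable (e : ∀ a, Fin 2 ↪ D a)

def Tup.ofColoring (c : V → Fin 2) (X : Finset V) : Tup D X :=
  fun a => e a.1 (c a.1)

noncomputable def Bag.ofColoring (X : Finset V) (c : V → Fin 2) : Bag D X :=
  ∑ k : Fin 2, Finsupp.single (Tup.ofColoring e (fun a => c a + k) X) 1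

theorem Bag.marginal_ofColoring {X Z : Finset V} (h : Z ⊆ X) (c : V → Fin 2) :
    Bag.marginal h (Bag.ofColoring e X c) = Bag.ofColoring e Z c := by
  simp only [Bag.marginal, Bag.ofColoring, Finsupp.mapDomain_finsetSum,
    Finsupp.mapDomain_single]
  rfl

theorem consistent_ofColoring [DecidableEq V] (X Y : Finset V) (c : V → Fin 2) :
    Consistent (Bag.ofColoring e X c) (Bag.ofColoring e Y c) :=
  ⟨_, Bag.marginal_ofColoring e _ c, Bag.marginal_ofColoring e _ c⟩

theorem Bag.ofColoring_ne_zero (X : Finset V) (c : V → Fin 2) : Bag.ofColoring e X c ≠ 0 := by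
  simp [Bag.ofColoring]

theorem Bag.exists_of_mem_support_ofColoring {X : Finset V} {c : V → Fin 2} {s : Tup D X}
    (hs : s ∈ (Bag.ofColoring e X c).support) :
    ∃ k : Fin 2, s = Tup.ofColoring e (fun a => c a + k) X := by
  classical
  obtain ⟨k, -, hk⟩ := Finset.mem_biUnion.1 (Finsupp.support_finsetSum hs)
  exact ⟨k, Finset.mem_singleton.1 (Finsupp.support_single_subset hk)⟩

theorem Bag.ofColoring_eq_of_eqOn_add {X : Finset V} {c c' : V → Fin 2} (k₀ : Fin 2)
    (h : ∀ a ∈ X, c' a = c a + k₀) : Bag.ofColoring e X c' = Bag.ofColoring e X c := by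
  have hshift : ∀ k, Tup.ofColoring e (fun a => c' a + k) X =
      Tup.ofColoring e (fun a => c a + (k₀ + k)) X :=
    fun k => funext fun a => by simp [Tup.ofColoring, h a a.2, add_assoc]
  simp only [Bag.ofColoring, hshift]
  exact Fintype.sum_equiv (Equiv.addLeft k₀) _ _ fun _ => rfl

theorem Bag.ofColoring_pair_eq [DecidableEq V] {a b : V} {c c' : V → Fin 2}
    (h : c a = c b ↔ c' a = c' b) :
    Bag.ofColoring e {a, b} c = Bag.ofColoring e {a, b} c' := by
  have hb : ∀ x y z w : Fin 2, (x = y ↔ z = w) → w = y + (z - x) := by decide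
  refine (Bag.ofColoring_eq_of_eqOn_add e (c' a - c a) fun x hx => ?_).symm
  rcases Finset.mem_insert.1 hx with rfl | hx
  · exact (add_sub_cancel _ _).symm
  · rw [Finset.mem_singleton.1 hx]
    exact hb _ _ _ _ h

theorem Bag.eq_iff_of_mem_support_ofColoring [DecidableEq V] {a b : V} {c : V → Fin 2}
    {s : Tup D {a, b}} (hs : s ∈ (Bag.ofColoring e {a, b} c).support) {x y : Fin 2}
    (hx : s ⟨a, Finset.mem_insert_self a {b}⟩ = e a x)
    (hy : s ⟨b, Finset.mem_insert_of_mem (Finset.mem_singleton_self b)⟩ = e b y) :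
    x = y ↔ c a = c b := by
  obtain ⟨k, rfl⟩ := Bag.exists_of_mem_support_ofColoring e hs
  rw [← (e a).injective hx, ← (e b).injective hy, add_left_inj]

end Coloring

theorem Fin.apply_eq_apply_zero_of_forall_apply_add_one {α : Type*} {n : ℕ}
    {f : Fin (n + 1) → α} (h : ∀ i, i ≠ Fin.last n → f (i + 1) = f i) (k : Fin (n + 1)) :
    f k = f 0 := by
  induction k using Fin.induction with
  | zero => rfl
  | succ j ih => rw [← Fin.coeSucc_eq_succ, h _ (Fin.castSucc_lt_last j).ne, ih]

section Cycle

variable {m : ℕ} {D : Fin (m + 3) → Type} (e : ∀ a, Fin 2 ↪ D a)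

def cycleEdgeColoring (i : Fin (m + 3)) : Fin (m + 3) → Fin 2 :=
  if i = Fin.last _ then Pi.single 0 1 else 0

theorem cycleEdgeColoring_eq_iff (i : Fin (m + 3)) :
    cycleEdgeColoring i i = cycleEdgeColoring i (i + 1) ↔ i ≠ Fin.last _ := by
  by_cases hi : i = Fin.last _
  · subst hi
    simp [cycleEdgeColoring, Fin.last_add_one, Fin.ext_iff]
  · simp [cycleEdgeColoring, hi]

noncomputable def cycleBag (i : Fin (m + 3)) : Bag D ({i, i + 1} : Finset (Fin (m + 3))) :=
  Bag.ofColoring e {i, i + 1} (cycleEdgeColoring i)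

theorem cycleBag_eq_ofColoring {i : Fin (m + 3)} {g : Fin (m + 3) → Fin 2}
    (hg : g i = g (i + 1) ↔ i ≠ Fin.last _) : cycleBag e i = Bag.ofColoring e {i, i + 1} g :=
  Bag.ofColoring_pair_eq e ((cycleEdgeColoring_eq_iff i).trans hg.symm)

theorem exists_coloring_separating_last (k : Fin (m + 3)) :
    ∃ g : Fin (m + 3) → Fin 2,
      (g k = g (k + 1) ↔ k ≠ Fin.last _) ∧ g (Fin.last _) ≠ g 0 := by
  have h0 : (0 : Fin (m + 3)) ≠ Fin.last _ := by simp [Fin.ext_iff]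
  have h1 : (1 : Fin (m + 3)) ≠ Fin.last _ := by simp [Fin.ext_iff]
  have hk1 : k + 1 = 0 → k = Fin.last _ := fun h =>
    add_right_cancel (h.trans (Fin.last_add_one _).symm)
  refine ⟨Pi.single (if k = 0 then Fin.last _ else 0) 1, ?_, ?_⟩
  · by_cases hk : k = 0
    · subst hk; simp [h0, h1]
    · by_cases hl : k = Fin.last _
      · subst hl; simp [hk, Fin.last_add_one]
      · simp [hk, hl, mt hk1 hl]
  · split_ifs <;> simp [h0, h0.symm]

theorem cycleBag_consistent (i j : Fin (m + 3)) : Consistent (cycleBag e i) (cycleBag e j) := by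
  obtain ⟨g, hi, hj⟩ : ∃ g : Fin (m + 3) → Fin 2,
      (g i = g (i + 1) ↔ i ≠ Fin.last _) ∧ (g j = g (j + 1) ↔ j ≠ Fin.last _) := by
    by_cases hi : i = Fin.last _
    · obtain ⟨g, hg, hlast⟩ := exists_coloring_separating_last j
      exact ⟨g, by simp [hi, Fin.last_add_one, hlast], hg⟩
    by_cases hj : j = Fin.last _
    · obtain ⟨g, hg, hlast⟩ := exists_coloring_separating_last i
      exact ⟨g, hg, by simp [hj, Fin.last_add_one, hlast]⟩
    exact ⟨0, by simp [hi], by simp [hj]⟩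
  rw [cycleBag_eq_ofColoring e hi, cycleBag_eq_ofColoring e hj]
  exact consistent_ofColoring e _ _ g

theorem cycleBag_not_globallyConsistent :
    ¬ GloballyConsistent (fun i : Fin (m + 3) => ({i, i + 1} : Finset (Fin (m + 3))))
      (cycleBag e) := by
  rintro ⟨T, hT⟩
  obtain ⟨t, ht⟩ : T.support.Nonempty := by
    rw [Finsupp.support_nonempty_iff]
    rintro rfl
    exact Bag.ofColoring_ne_zero e _ _ ((hT 0).symm.trans Finsupp.mapDomain_zero)
  have hedge : ∀ i, Tup.restrict _ t ∈ (cycleBag e i).support := fun i =>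
    hT i ▸ Bag.restrict_mem_support_marginal _ ht
  have hU : ∀ a, a ∈ Finset.univ.sup fun i : Fin (m + 3) => ({i, i + 1} : Finset _) :=
    fun a => Finset.mem_sup.2 ⟨a, Finset.mem_univ a, Finset.mem_insert_self a _⟩
  have hcolor : ∀ a, ∃ x, t ⟨a, hU a⟩ = e a x := fun a => by
    obtain ⟨k, hk⟩ := Bag.exists_of_mem_support_ofColoring e (hedge a)
    exact ⟨_, congrFun hk ⟨a, Finset.mem_insert_self a _⟩⟩
  choose col hcol using hcolor
  have hflip : ∀ i, col (i + 1) = col i ↔ i ≠ Fin.last _ := fun i =>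
    eq_comm.trans <| (Bag.eq_iff_of_mem_support_ofColoring e (hedge i) (hcol i)
      (hcol (i + 1))).trans (cycleEdgeColoring_eq_iff i)
  have hpath := Fin.apply_eq_apply_zero_of_forall_apply_add_one (fun i hi => (hflip i).2 hi)
    (Fin.last _)
  exact (hflip (Fin.last _)).1 (by rw [Fin.last_add_one, hpath]) rfl

end Cycle

/-- for every `n ≥ 3`, the cycle hypergraph `C_n` with vertices `A_1, …, A_n`
(each with domain containing `{0,1}`) and hyperedges `{A_i, A_{i+1}}` (cyclically) does not
have the local-to-global consistency property for bags: some pairwise consistent collection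
of bags over its hyperedges is not globally consistent.  (Here `n = m + 3`, so that all
`n ≥ 3` are covered; the vertices are the elements of `Fin (m+3)` and the hyperedges are
`{i, i+1}` with addition modulo `n`.) -/
theorem stmt7 (m : ℕ) (D : Fin (m + 3) → Type) (e : ∀ a : Fin (m + 3), Fin 2 ↪ D a) :
    ∃ R : ∀ i : Fin (m + 3), Bag D ({i, i + 1} : Finset (Fin (m + 3))),
      (∀ i j, Consistent (R i) (R j)) ∧
      ¬ GloballyConsistent (fun i : Fin (m + 3) => ({i, i + 1} : Finset (Fin (m + 3)))) R :=
  ⟨cycleBag e, cycleBag_consistent e, cycleBag_not_globallyConsistent e⟩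
end

section
/- Let H_1 and H_0 be hypergraphs with finite vertex sets and finitely many hyperedges such that H_0 is obtained from H_1 by a sequence of safe-deletion operations. Then for every collection D_0 of bags over H_0 there exists a collection D_1 of bags over H_1 such that for every positive integer k, D_0 is k-wise consistent if and only if D_1 is k-wise consistent. -/
variable {A : Type} [DecidableEq A]

/-- A hypergraph: a finite set of vertices together with a finite set of hyperedges. -/
structure FinHypergraph (A : Type) where
  V : Finset A
  E : Finset (Finset A)

/-- Deletion of a vertex `u`: the hypergraph induced on `V ∖ {u}`, whose hyperedges are the
nonempty sets `X ∩ (V ∖ {u})` for hyperedges `X`. -/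
def FinHypergraph.vdel (H : FinHypergraph A) (u : A) : FinHypergraph A where
  V := H.V.erase u
  E := (H.E.image (fun X => X ∩ H.V.erase u)).filter (fun X => X.Nonempty)

/-- A single safe-deletion step: a vertex-deletion or a covered-edge-deletion. -/
def SafeStep (H H' : FinHypergraph A) : Prop :=
  (∃ u ∈ H.V, H' = H.vdel u) ∨
  (∃ e ∈ H.E, (∃ f ∈ H.E, f ≠ e ∧ e ⊆ f) ∧ H' = ⟨H.V, H.E.erase e⟩)

/-- `k`-wise consistency of a collection of bags indexed by a finite set `E` of schemas:
every subcollection indexed by at most `k` schemas is globally consistent. -/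
def KWiseConsistent (D : A → Type) (E : Finset (Finset A)) (R : ∀ X ∈ E, Bag D X)
    (k : ℕ) : Prop :=
  ∀ (I : Finset (Finset A)) (hI : I ⊆ E), I.card ≤ k →
    ∃ T : Bag D (I.sup id), ∀ (X : Finset A) (hX : X ∈ I),
      Bag.marginal (Finset.le_sup (f := id) hX) T = R X (hI hX)

/-!
Each safe deletion can be undone on bags without changing `k`-wise consistency for any `k`.
If the deleted edge `e` is covered by `f`, give `e` the marginal of the bag on `f`. A vertex
deletion is the restriction to `W = V ∖ {u}`: extend the bag on `X ∩ W` to `X` by a fixed default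
value outside `W`; an edge disjoint from `W` gets the (padded) marginal of an arbitrary edge's
bag on `∅`, which only records the common total. In both constructions each bag on one side is
a (padded) marginal of a bag on the other, and marginals and padding of a join are again joins,
so joins of at most `k` bags transfer in both directions.
-/

section Lift

variable {D : A → Type}

namespace Bag

theorem marginal_marginal_s9 {X Y Z : Finset A} (h₁ : Y ⊆ X) (h₂ : Z ⊆ Y) (R : Bag D X) :
    (R.marginal h₁).marginal h₂ = R.marginal (h₂.trans h₁) := by
  rw [Bag.marginal, Bag.marginal, Bag.marginal, ← Finsupp.mapDomain_comp]
  rfl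

theorem marginal_self_s9 {X : Finset A} (h : X ⊆ X) (R : Bag D X) : R.marginal h = R :=
  Finsupp.mapDomain_id

end Bag

def Tup.extend (c : ∀ a, D a) {Y X : Finset A} (t : Tup D Y) : Tup D X :=
  fun a => if h : a.1 ∈ Y then t ⟨a.1, h⟩ else c a.1

theorem Tup.restrict_extend (c : ∀ a, D a) {X Y Y' Z : Finset A} (hZ : Z ⊆ X) (hY : Y' ⊆ Y)
    (hZY : ∀ a ∈ Z, a ∈ Y → a ∈ Y') (t : Tup D Y) :
    (t.extend c : Tup D X).restrict hZ = (t.restrict hY).extend c := by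
  funext a
  by_cases ha : a.1 ∈ Y'
  · simp [Tup.restrict, Tup.extend, ha, hY ha]
  · have ha' : a.1 ∉ Y := fun h => ha (hZY a a.2 h)
    simp [Tup.restrict, Tup.extend, ha, ha']

theorem Tup.restrict_extend_of_subset (c : ∀ a, D a) {X Y : Finset A} (h : Y ⊆ X)
    (t : Tup D Y) : (t.extend c : Tup D X).restrict h = t := by
  funext a
  simp [Tup.restrict, Tup.extend]

noncomputable def Bag.extend (c : ∀ a, D a) {Y X : Finset A} (R : Bag D Y) : Bag D X :=
  Finsupp.mapDomain (Tup.extend c) R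

theorem Bag.marginal_extend (c : ∀ a, D a) {X Y Y' Z : Finset A} (hZ : Z ⊆ X) (hY : Y' ⊆ Y)
    (hZY : ∀ a ∈ Z, a ∈ Y → a ∈ Y') (R : Bag D Y) :
    (R.extend c : Bag D X).marginal hZ = (R.marginal hY).extend c := by
  simp only [Bag.extend, Bag.marginal, ← Finsupp.mapDomain_comp]
  congr 1
  funext t
  exact Tup.restrict_extend c hZ hY hZY t

theorem Bag.marginal_extend_of_subset (c : ∀ a, D a) {X Y : Finset A} (h : Y ⊆ X)
    (R : Bag D Y) : (R.extend c : Bag D X).marginal h = R := by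
  rw [Bag.extend, Bag.marginal, ← Finsupp.mapDomain_comp]
  conv_rhs => rw [← Finsupp.mapDomain_id (v := R)]
  congr 1
  funext t
  exact Tup.restrict_extend_of_subset c h t

theorem KWiseConsistent.of_marginal {E E' : Finset (Finset A)} {R : ∀ X ∈ E, Bag D X}
    {R' : ∀ Y ∈ E', Bag D Y} {k : ℕ}
    (hR' : ∀ Y (hY : Y ∈ E'), ∃ X, ∃ (hX : X ∈ E) (h : Y ⊆ X), R' Y hY = (R X hX).marginal h)
    (hR : KWiseConsistent D E R k) : KWiseConsistent D E' R' k := by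
  choose! g hgE hYg hR'g using hR'
  intro I hI hcard
  obtain ⟨T, hT⟩ := hR (I.image g) (Finset.image_subset_iff.2 fun Y hY => hgE Y (hI hY))
    (Finset.card_image_le.trans hcard)
  have hsup : I.sup id ⊆ (I.image g).sup id := Finset.sup_le fun Y hY =>
    (hYg Y (hI hY)).trans (Finset.le_sup (f := id) (Finset.mem_image_of_mem g hY))
  refine ⟨T.marginal hsup, fun Y hY => ?_⟩
  rw [hR'g Y (hI hY), ← hT (g Y) (Finset.mem_image_of_mem g hY), Bag.marginal_marginal_s9,
    Bag.marginal_marginal_s9]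

theorem KWiseConsistent.of_extend_marginal (c : ∀ a, D a) {W : Finset A}
    {E E' : Finset (Finset A)} {R : ∀ X ∈ E, Bag D X} {R' : ∀ Y ∈ E', Bag D Y} {k : ℕ}
    (hE' : ∀ Y ∈ E', Y ⊆ W)
    (hR : ∀ X (hX : X ∈ E), ∃ Y, ∃ (hY : Y ∈ E') (h : X ∩ W ⊆ Y),
      R X hX = ((R' Y hY).marginal h).extend c)
    (hR' : KWiseConsistent D E' R' k) : KWiseConsistent D E R k := by
  choose! σ hσE hσ hRσ using hR
  intro I hI hcard
  obtain ⟨T, hT⟩ := hR' (I.image σ) (Finset.image_subset_iff.2 fun X hX => hσE X (hI hX))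
    (Finset.card_image_le.trans hcard)
  have hTW : (I.image σ).sup id ⊆ W := Finset.sup_le fun Y hY =>
    hE' Y (Finset.image_subset_iff.2 (fun X hX => hσE X (hI hX)) hY)
  refine ⟨T.extend c, fun X hX => ?_⟩
  have hσX : σ X ⊆ (I.image σ).sup id :=
    Finset.le_sup (f := id) (Finset.mem_image_of_mem σ hX)
  rw [Bag.marginal_extend c _ ((hσ X (hI hX)).trans hσX)
      (fun a ha haT => Finset.mem_inter.2 ⟨ha, hTW haT⟩),
    hRσ X (hI hX), ← hT (σ X) (Finset.mem_image_of_mem σ hX), Bag.marginal_marginal_s9]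

theorem kwiseConsistent_single_const (c : ∀ a, D a) (E : Finset (Finset A)) (n k : ℕ) :
    KWiseConsistent D E (fun _ _ => Finsupp.single (fun a => c a) n) k :=
  fun _ _ _ => ⟨Finsupp.single (fun a => c a) n, fun _ _ => Finsupp.mapDomain_single⟩

theorem exists_lift_erase {E : Finset (Finset A)} {e f : Finset A} (hf : f ∈ E)
    (hfe : f ≠ e) (hef : e ⊆ f) (R' : ∀ X ∈ E.erase e, Bag D X) :
    ∃ R : ∀ X ∈ E, Bag D X,
      ∀ k, KWiseConsistent D (E.erase e) R' k ↔ KWiseConsistent D E R k := by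
  have hf' : f ∈ E.erase e := Finset.mem_erase.2 ⟨hfe, hf⟩
  refine ⟨fun X hX => if hXe : X = e then (R' f hf').marginal (hXe ▸ hef)
    else R' X (Finset.mem_erase.2 ⟨hXe, hX⟩), fun k => ⟨?_, ?_⟩⟩
  · refine KWiseConsistent.of_marginal fun X hX => ?_
    by_cases hXe : X = e
    · subst hXe
      exact ⟨f, hf', hef, dif_pos rfl⟩
    · exact ⟨X, Finset.mem_erase.2 ⟨hXe, hX⟩, subset_rfl, by rw [dif_neg hXe, Bag.marginal_self_s9]⟩
  · refine KWiseConsistent.of_marginal fun X hX => ?_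
    have hXe := (Finset.mem_erase.1 hX).1
    exact ⟨X, Finset.mem_of_mem_erase hX, subset_rfl, by rw [dif_neg hXe, Bag.marginal_self_s9]⟩

/-- The hyperedges of the induced hypergraph `H[W]`; `FinHypergraph.vdel H u` is the case
`W = H.V.erase u`. -/
def inducedEdges (E : Finset (Finset A)) (W : Finset A) : Finset (Finset A) :=
  (E.image (fun X => X ∩ W)).filter (fun X => X.Nonempty)

theorem mem_inducedEdges {E : Finset (Finset A)} {W Y : Finset A} :
    Y ∈ inducedEdges E W ↔ (∃ X ∈ E, X ∩ W = Y) ∧ Y.Nonempty := by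
  simp [inducedEdges]

theorem inter_eq_empty_of_notMem_inducedEdges {E : Finset (Finset A)} {W X : Finset A}
    (hX : X ∈ E) (h : X ∩ W ∉ inducedEdges E W) : X ∩ W = ∅ := by
  by_contra hne
  exact h (mem_inducedEdges.2 ⟨⟨X, hX, rfl⟩, Finset.nonempty_iff_ne_empty.2 hne⟩)

theorem exists_lift_inducedEdges [∀ a, Nonempty (D a)] (E : Finset (Finset A)) (W : Finset A)
    (R' : ∀ Y ∈ inducedEdges E W, Bag D Y) :
    ∃ R : ∀ X ∈ E, Bag D X,
      ∀ k, KWiseConsistent D (inducedEdges E W) R' k ↔ KWiseConsistent D E R k := by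
  obtain ⟨c⟩ : Nonempty (∀ a, D a) := inferInstance
  rcases (inducedEdges E W).eq_empty_or_nonempty with hempty | ⟨Y₀, hY₀⟩
  · have hconst := kwiseConsistent_single_const c E 1
    exact ⟨_, fun k => iff_of_true
      ((hconst k).of_marginal fun Y hY => absurd hY (by simp [hempty])) (hconst k)⟩
  have hsub : ∀ X ∈ E, X ∩ W ∉ inducedEdges E W → X ∩ W ⊆ Y₀ := fun X hX h => by
    simp [inter_eq_empty_of_notMem_inducedEdges hX h]
  refine ⟨fun X hX => Bag.extend c (if h : X ∩ W ∈ inducedEdges E W then R' _ h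
    else (R' Y₀ hY₀).marginal (hsub X hX h)), fun k => ⟨?_, ?_⟩⟩
  · refine KWiseConsistent.of_extend_marginal c (W := W)
      (fun Y hY => ?_) (fun X hX => ?_)
    · obtain ⟨⟨X, -, rfl⟩, -⟩ := mem_inducedEdges.1 hY
      exact Finset.inter_subset_right
    · by_cases h : X ∩ W ∈ inducedEdges E W
      · exact ⟨X ∩ W, h, subset_rfl, by rw [dif_pos h, Bag.marginal_self_s9]⟩
      · exact ⟨Y₀, hY₀, hsub X hX h, by rw [dif_neg h]⟩
  · refine KWiseConsistent.of_marginal fun Y hY => ?_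
    obtain ⟨⟨X, hX, rfl⟩, -⟩ := mem_inducedEdges.1 hY
    exact ⟨X, hX, Finset.inter_subset_left,
      by rw [dif_pos hY, Bag.marginal_extend_of_subset]⟩

theorem SafeStep.exists_lift [∀ a, Nonempty (D a)] {H H' : FinHypergraph A}
    (hstep : SafeStep H H') (R' : ∀ X ∈ H'.E, Bag D X) :
    ∃ R : ∀ X ∈ H.E, Bag D X,
      ∀ k, KWiseConsistent D H'.E R' k ↔ KWiseConsistent D H.E R k := by
  rcases hstep with ⟨u, -, rfl⟩ | ⟨e, -, ⟨f, hf, hfe, hef⟩, rfl⟩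
  · exact exists_lift_inducedEdges H.E (H.V.erase u) R'
  · exact exists_lift_erase hf hfe hef R'

end Lift

/-- if `H0` is obtained from the hypergraph `H1` by a sequence of safe-deletion
operations, then for every collection `D0` of bags over `H0` there is a collection `D1` of
bags over `H1` such that, for every positive integer `k`, `D0` is `k`-wise consistent iff
`D1` is `k`-wise consistent. -/
theorem stmt9 {D : A → Type} [∀ a : A, Nonempty (D a)] (H1 H0 : FinHypergraph A)
    (hE1 : ∀ X ∈ H1.E, X ⊆ H1.V ∧ X.Nonempty)
    (hsteps : Relation.ReflTransGen SafeStep H1 H0)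
    (D0 : ∀ X ∈ H0.E, Bag D X) :
    ∃ D1 : ∀ X ∈ H1.E, Bag D X,
      ∀ k : ℕ, 1 ≤ k →
        (KWiseConsistent D H0.E D0 k ↔ KWiseConsistent D H1.E D1 k) := by
  clear hE1
  induction hsteps using Relation.ReflTransGen.head_induction_on with
  | refl => exact ⟨D0, fun _ _ => Iff.rfl⟩
  | head hstep _ ih =>
    obtain ⟨D', hD'⟩ := ih
    obtain ⟨D1, hD1⟩ := hstep.exists_lift D'
    exact ⟨D1, fun k hk => (hD' k hk).trans (hD1 k)⟩
end

section
/- Let R and S be consistent bags over finite attribute sets X and Y, and let W be a minimal witness to their consistency, i.e., there is no bag U witnessing the consistency of R and S whose support is a proper subset of the support of W. Then |Supp(W)| ≤ |Supp(R)| + |Supp(S)|. -/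
variable {A : Type} [DecidableEq A]

/-!
Think of the support of `W` as the edges of a bipartite multigraph on `Supp R ⊔ Supp S`, the tuple
`t` joining `t[X]` to `t[Y]`. If there are more edges than vertices, repeatedly deleting an edge
at a leaf keeps this inequality, so eventually every vertex has degree at least two and an
alternating walk closes up into a cycle. The edges of an even cycle split into two halves `A`, `B`
that meet every vertex equally often; moving the least multiplicity `t` on `B` from each edge of `B`
to each edge of `A` keeps both marginals and empties an edge of `B`, so `W` was not minimal.
-/

theorem Multiset.map_range_rotate {β : Type*} {f : ℕ → β} {n : ℕ} (h : f n = f 0) :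
    (range n).map (fun k => f (k + 1)) = (range n).map f := by
  apply (cons_inj_right (f 0)).1
  calc f 0 ::ₘ (range n).map (fun k => f (k + 1)) = (range (1 + n)).map f := by
        rw [range_add, map_add, map_map]; simp [add_comm]
    _ = f 0 ::ₘ (range n).map f := by rw [add_comm, range_succ, map_cons, h]

theorem Set.Finite.exists_lt_map_eq_and_injOn_Iio {α : Type*} {f : ℕ → α} {s : Set α}
    (hf : ∀ k, f k ∈ s) (hs : s.Finite) : ∃ i j, i < j ∧ f i = f j ∧ Set.InjOn f (Set.Iio j) := by
  classical
  have hrep : ∃ j, ∃ i < j, f i = f j := by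
    obtain ⟨i, j, hij, h⟩ := hs.exists_lt_map_eq_of_forall_mem hf
    exact ⟨j, i, hij, h⟩
  obtain ⟨i, hij, h⟩ := Nat.find_spec hrep
  refine ⟨i, Nat.find hrep, hij, h, fun a ha b hb hab => ?_⟩
  by_contra hne
  rcases lt_or_gt_of_ne hne with hlt | hlt
  · exact Nat.find_min hrep hb ⟨a, hlt, hab⟩
  · exact Nat.find_min hrep ha ⟨b, hlt, hab.symm⟩

section

variable {α β γ : Type*} {p : α → β} {q : α → γ}

def IsAlternating (p : α → β) (q : α → γ) (c : ℕ → α) : Prop :=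
  ∀ k, p (c (2 * k)) = p (c (2 * k + 1)) ∧ q (c (2 * k + 1)) = q (c (2 * k + 2))

theorem IsAlternating.comp_succ {c : ℕ → α} (hc : IsAlternating p q c) :
    IsAlternating q p (fun k => c (k + 1)) := fun k =>
  ⟨(hc k).2, by simpa [mul_add, add_assoc] using (hc (k + 1)).1⟩

theorem IsAlternating.comp_two_mul_add {c : ℕ → α} (hc : IsAlternating p q c) (m : ℕ) :
    IsAlternating p q (fun k => c (2 * m + k)) := fun k => by
  simpa [mul_add, add_assoc] using hc (m + k)

def HasBalancedPair (p : α → β) (q : α → γ) (E : Finset α) : Prop :=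
  ∃ A ⊆ E, ∃ B ⊆ E, Disjoint A B ∧ B.Nonempty ∧
    A.val.map p = B.val.map p ∧ A.val.map q = B.val.map q

theorem HasBalancedPair.mono {E F : Finset α} (h : HasBalancedPair p q E) (hEF : E ⊆ F) :
    HasBalancedPair p q F := by
  obtain ⟨A, hA, B, hB, h⟩ := h
  exact ⟨A, hA.trans hEF, B, hB.trans hEF, h⟩

theorem HasBalancedPair.swap {E : Finset α} (h : HasBalancedPair p q E) :
    HasBalancedPair q p E := by
  obtain ⟨A, hA, B, hB, hAB, hB₀, hp, hq⟩ := h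
  exact ⟨A, hA, B, hB, hAB, hB₀, hq, hp⟩

theorem IsAlternating.hasBalancedPair_of_cycle {c : ℕ → α} {n : ℕ} {E : Finset α}
    (hc : IsAlternating p q c) (hn : 0 < n) (hinj : Set.InjOn c (Set.Iio (2 * n)))
    (hclose : q (c (2 * n)) = q (c 0)) (hE : ∀ k < 2 * n, c k ∈ E) : HasBalancedPair p q E := by
  classical
  have hinjA : Set.InjOn (fun k => c (2 * k)) (Finset.range n) := fun k hk l hl h => by
    simp only [Finset.coe_range, Set.mem_Iio] at hk hl
    have := hinj (by simp; omega) (by simp; omega) h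
    omega
  have hinjB : Set.InjOn (fun k => c (2 * k + 1)) (Finset.range n) := fun k hk l hl h => by
    simp only [Finset.coe_range, Set.mem_Iio] at hk hl
    have := hinj (by simp; omega) (by simp; omega) h
    omega
  refine ⟨(Finset.range n).image (fun k => c (2 * k)), ?_,
    (Finset.range n).image (fun k => c (2 * k + 1)), ?_, ?_, ?_, ?_, ?_⟩
  · exact Finset.image_subset_iff.2 fun k hk => hE _ (by simp at hk; omega)
  · exact Finset.image_subset_iff.2 fun k hk => hE _ (by simp at hk; omega)
  · simp only [Finset.disjoint_left, Finset.mem_image, Finset.mem_range, not_exists, not_and]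
    rintro _ ⟨k, hk, rfl⟩ l hl h
    have := hinj (by simp; omega) (by simp; omega) h
    omega
  · exact ⟨c 1, Finset.mem_image.2 ⟨0, Finset.mem_range.2 hn, rfl⟩⟩
  · rw [Finset.image_val_of_injOn hinjA, Finset.image_val_of_injOn hinjB, Multiset.map_map,
      Multiset.map_map]
    exact Multiset.map_congr rfl fun k _ => (hc k).1
  · rw [Finset.image_val_of_injOn hinjA, Finset.image_val_of_injOn hinjB, Multiset.map_map,
      Multiset.map_map, Finset.range_val]
    have hrot := Multiset.map_range_rotate (f := fun k => q (c (2 * k))) (by simpa using hclose)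
    exact hrot.symm.trans (Multiset.map_congr rfl fun k _ => (hc k).2.symm)

theorem IsAlternating.hasBalancedPair_of_eq {w : ℕ → α} {E : Finset α} (hw : IsAlternating p q w)
    (hne : ∀ k, w (k + 1) ≠ w k) (hE : ∀ k, w k ∈ E) {m j : ℕ} (hmj : 2 * m < j)
    (hrep : w (2 * m) = w j) (hinj : Set.InjOn w (Set.Iio j)) : HasBalancedPair p q E := by
  have hj : 2 * m + 1 ≠ j := by rintro rfl; exact hne _ hrep.symm
  obtain ⟨n, hn | hn⟩ := Nat.even_or_odd' (j - 2 * m)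
  · refine (hw.comp_two_mul_add m).hasBalancedPair_of_cycle (n := n) (by omega)
      ?_ ?_ fun k _ => hE _
    · exact fun a ha b hb h => by
        have := hinj (by simp at ha ⊢; omega) (by simp at hb ⊢; omega) h
        omega
    · simp only [add_zero, hrep, show 2 * m + 2 * n = j by omega]
  · -- odd gap: both neighbours of `w (2 * m)` on the closed walk share its `p`-value,
    -- so it can be skipped
    refine ((hw.comp_two_mul_add m).comp_succ.hasBalancedPair_of_cycle (n := n) (by omega) ?_ ?_
      fun k _ => hE _).swap
    · exact fun a ha b hb h => by
        have := hinj (by simp at ha ⊢; omega) (by simp at hb ⊢; omega) h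
        omega
    · simpa [show 2 * m + (2 * n + 1) = j by omega, ← hrep] using (hw m).1

theorem exists_isAlternating {E : Finset α} (hE : E.Nonempty)
    (hp : ∀ e ∈ E, ∃ f ∈ E, p f = p e ∧ f ≠ e) (hq : ∀ e ∈ E, ∃ f ∈ E, q f = q e ∧ f ≠ e) :
    ∃ w : ℕ → α, IsAlternating p q w ∧ (∀ k, w (k + 1) ≠ w k) ∧ ∀ k, w k ∈ E := by
  obtain ⟨e, he⟩ := hE
  choose! np hnpE hnp hnp_ne using hp
  choose! nq hnqE hnq hnq_ne using hq
  let w : ℕ → α := fun k => Nat.rec e (fun k x => if Even k then np x else nq x) k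
  have hw : ∀ k, w (k + 1) = if Even k then np (w k) else nq (w k) := fun k => rfl
  have hwE : ∀ k, w k ∈ E := fun k => by
    induction k with
    | zero => exact he
    | succ k ih => rw [hw]; split_ifs; exacts [hnpE _ ih, hnqE _ ih]
  refine ⟨w, fun k => ⟨?_, ?_⟩, fun k => ?_, hwE⟩
  · simp [hw, hnp _ (hwE _)]
  · rw [hw (2 * k + 1), if_neg (Nat.not_even_bit1 k)]
    exact (hnq _ (hwE (2 * k + 1))).symm
  · rw [hw]; split_ifs
    exacts [hnp_ne _ (hwE k), hnq_ne _ (hwE k)]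

theorem hasBalancedPair_of_forall_exists_ne {E : Finset α} (hE : E.Nonempty)
    (hp : ∀ e ∈ E, ∃ f ∈ E, p f = p e ∧ f ≠ e) (hq : ∀ e ∈ E, ∃ f ∈ E, q f = q e ∧ f ≠ e) :
    HasBalancedPair p q E := by
  obtain ⟨w, hw, hne, hwE⟩ := exists_isAlternating hE hp hq
  obtain ⟨i, j, hij, hrep, hinj⟩ := E.finite_toSet.exists_lt_map_eq_and_injOn_Iio hwE
  obtain ⟨m, rfl | rfl⟩ := Nat.even_or_odd' i
  · exact hw.hasBalancedPair_of_eq hne hwE hij hrep hinj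
  · refine (hw.comp_succ.hasBalancedPair_of_eq (fun k => hne (k + 1)) (fun k => hwE _)
      (m := m) (j := j - 1) (by omega) (by simpa [show j - 1 + 1 = j by omega] using hrep) ?_).swap
    exact fun a ha b hb h => by
      have := hinj (by simp at ha ⊢; omega) (by simp at hb ⊢; omega) h
      omega

theorem Finset.card_image_erase_lt [DecidableEq α] [DecidableEq β] {E : Finset α} {e : α}
    (he : e ∈ E) (hu : ∀ f ∈ E, p f = p e → f = e) :
    ((E.erase e).image p).card < (E.image p).card := by
  refine Finset.card_lt_card ((Finset.ssubset_iff_of_subset (Finset.image_subset_image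
    (Finset.erase_subset e E))).2 ⟨p e, Finset.mem_image_of_mem p he, ?_⟩)
  simp only [Finset.mem_image, Finset.mem_erase, not_exists, not_and, and_imp]
  exact fun f hfe hf h => hfe (hu f hf h)

theorem hasBalancedPair_of_card_lt [DecidableEq β] [DecidableEq γ] {E : Finset α}
    (h : (E.image p).card + (E.image q).card < E.card) : HasBalancedPair p q E := by
  classical
  induction E using Finset.strongInduction with
  | H E ih =>
  by_cases hleaf : ∃ e ∈ E, (∀ f ∈ E, p f = p e → f = e) ∨ ∀ f ∈ E, q f = q e → f = e
  · obtain ⟨e, he, hu⟩ := hleaf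
    refine (ih _ (Finset.erase_ssubset he) ?_).mono (Finset.erase_subset e E)
    have := Finset.card_le_card (Finset.image_subset_image (f := p) (Finset.erase_subset e E))
    have := Finset.card_le_card (Finset.image_subset_image (f := q) (Finset.erase_subset e E))
    rw [Finset.card_erase_of_mem he]
    rcases hu with hu | hu
    · have := Finset.card_image_erase_lt he hu
      omega
    · have := Finset.card_image_erase_lt he hu
      omega
  push Not at hleaf
  exact hasBalancedPair_of_forall_exists_ne (Finset.card_pos.1 (by omega))
    (fun e he => (hleaf e he).1) (fun e he => (hleaf e he).2)

theorem Finsupp.mapDomain_sum_single_eq {δ : Type*} {r : α → δ} {A B : Finset α}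
    (h : A.val.map r = B.val.map r) (t : ℕ) :
    (∑ a ∈ A, single a t).mapDomain r = (∑ b ∈ B, single b t).mapDomain r := by
  classical
  rw [← toMultiset_toFinsupp (mapDomain r _), ← toMultiset_toFinsupp (mapDomain r (∑ b ∈ B, _)),
    ← toMultiset_map, ← toMultiset_map, toMultiset_sum_single, toMultiset_sum_single,
    Multiset.map_nsmul, Multiset.map_nsmul, h]

theorem exists_support_ssubset_of_hasBalancedPair {W : α →₀ ℕ}
    (h : HasBalancedPair p q W.support) :
    ∃ U : α →₀ ℕ, U.mapDomain p = W.mapDomain p ∧ U.mapDomain q = W.mapDomain q ∧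
      U.support ⊂ W.support := by
  classical
  obtain ⟨A, hA, B, hB, hAB, hB₀, hp, hq⟩ := h
  obtain ⟨b, hb, hbt⟩ := B.exists_mem_eq_inf' hB₀ W
  set t := B.inf' hB₀ W
  have hsingle : ∀ (S : Finset α) e, (∑ a ∈ S, Finsupp.single a t) e = if e ∈ S then t else 0 :=
    fun S e => by simp [Finsupp.finsetSum_apply, Finsupp.single_apply]
  have hle : ∑ b ∈ B, Finsupp.single b t ≤ W := fun e => by
    rw [hsingle]; split_ifs with he
    exacts [B.inf'_le W he, Nat.zero_le _]
  refine ⟨W - ∑ b ∈ B, Finsupp.single b t + ∑ a ∈ A, Finsupp.single a t, ?_, ?_, ?_⟩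
  · rw [Finsupp.mapDomain_add, Finsupp.mapDomain_sum_single_eq hp, ← Finsupp.mapDomain_add,
      tsub_add_cancel_of_le hle]
  · rw [Finsupp.mapDomain_add, Finsupp.mapDomain_sum_single_eq hq, ← Finsupp.mapDomain_add,
      tsub_add_cancel_of_le hle]
  · rw [Finset.ssubset_iff_of_subset]
    · refine ⟨b, hB hb, Finsupp.notMem_support_iff.2 ?_⟩
      rw [Finsupp.add_apply, Finsupp.tsub_apply, hsingle, hsingle, if_pos hb,
        if_neg (Finset.disjoint_right.1 hAB hb), hbt, Nat.sub_self, add_zero]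
    · intro e he
      by_contra hW
      rw [Finsupp.notMem_support_iff] at hW
      have heA : e ∉ A := fun h => Finsupp.mem_support_iff.1 (hA h) hW
      rw [Finsupp.mem_support_iff, Finsupp.add_apply, Finsupp.tsub_apply, hsingle A, if_neg heA,
        hW] at he
      exact he (by simp)
end

/-- if `W` is a *minimal* witness to the consistency of the bags `R` and `S`
(no witness has support properly contained in that of `W`), then the support size of `W` is
at most the sum of the support sizes of `R` and `S`. -/
theorem stmt16 {D : A → Type} {X Y : Finset A} (R : Bag D X) (S : Bag D Y)
    (W : Bag D (X ∪ Y))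
    (hWX : Bag.marginal Finset.subset_union_left W = R)
    (hWY : Bag.marginal Finset.subset_union_right W = S)
    (hmin : ∀ U : Bag D (X ∪ Y),
      Bag.marginal Finset.subset_union_left U = R →
      Bag.marginal Finset.subset_union_right U = S →
      ¬ U.support ⊂ W.support) :
    W.support.card ≤ R.support.card + S.support.card := by
  classical
  by_contra! hcard
  have hsupp {Z : Finset A} (h : Z ⊆ X ∪ Y) :
      (Bag.marginal h W).support = W.support.image (Tup.restrict h) :=
    Finsupp.mapDomain_support_of_subsingletonAddUnits _ _
  rw [← hWX, ← hWY, hsupp, hsupp] at hcard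
  obtain ⟨U, hUX, hUY, hU⟩ :=
    exists_support_ssubset_of_hasBalancedPair (hasBalancedPair_of_card_lt hcard)
  exact hmin U (hUX.trans hWX) (hUY.trans hWY) hU
end
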